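/- arXiv:2208.02324 — 6 statements merged into one kernel-verified Lean document; each statement's English description precedes it below -/
import Mathlib

section
/- Let N ≥ 3 be odd, let p k = (cos(2πk/N), sin(2πk/N)) ∈ ℝ² for k ∈ ZMod N be the vertices of the regular N-gon, and for each k ∈ ZMod N let s k = segment ℝ (p k) (p (k + (N−1)/2)) (the star-polygon construction generalizing the pentagram). Then every line-segment is a splitter: for all j, k ∈ ZMod N with j ≠ k, the intersection s j ∩ s k is nonempty. -/
/-!
Write `e θ = (cos θ, sin θ)`. The orientation determinant `orient` of three points of the unit circle is
`4 sin ((β - α)/2) sin ((γ - α)/2) sin ((γ - β)/2)`, so it is positive for angles listed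
counterclockwise within one turn. Hence two chords with interleaved endpoints
`θ₁ < θ₂ < θ₃ < θ₄ < θ₁ + 2π` separate each other's endpoints and cross.
The star-polygon segments starting at vertices `J` and `J + d` with `0 < d < (N - 1)/2` have
interleaved endpoints; for `d = (N - 1)/2` they share a vertex, and every other pair reduces to
one of these by exchanging the two segments.
-/

open Real

def orient (a b c : ℝ × ℝ) : ℝ :=
  (b.1 - a.1) * (c.2 - a.2) - (b.2 - a.2) * (c.1 - a.1)

theorem inv_sub_smul_smul_sub_smul_mem_segment {E : Type*} [AddCommGroup E] [Module ℝ E]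
    {u v : ℝ} (h : u * v < 0) (y z : E) :
    (u - v)⁻¹ • (u • y - v • z) ∈ segment ℝ z y := by
  have huv : u - v ≠ 0 := sub_ne_zero.mpr fun huv => by
    rw [huv] at h; linarith [mul_self_nonneg v]
  obtain ⟨hz, hy⟩ : 0 ≤ -v / (u - v) ∧ 0 ≤ u / (u - v) := by
    rcases mul_neg_iff.mp h with ⟨hu, hv⟩ | ⟨hu, hv⟩
    · exact ⟨div_nonneg (by linarith) (by linarith), div_nonneg (by linarith) (by linarith)⟩
    · exact ⟨div_nonneg_of_nonpos (by linarith) (by linarith),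
        div_nonneg_of_nonpos (by linarith) (by linarith)⟩
  refine ⟨-v / (u - v), u / (u - v), hz, hy, by field_simp; ring, ?_⟩
  rw [smul_sub, smul_smul, smul_smul, div_eq_inv_mul, div_eq_inv_mul, mul_neg, neg_smul,
    ← sub_eq_neg_add]

theorem segment_inter_nonempty_of_orient_mul_neg {a b c d : ℝ × ℝ}
    (hcd : orient a b c * orient a b d < 0) (hab : orient c d a * orient c d b < 0) :
    (segment ℝ a b ∩ segment ℝ c d).Nonempty := by
  -- both points are the intersection of the lines `ab` and `cd`
  refine ⟨_, ?_, inv_sub_smul_smul_sub_smul_mem_segment hcd d c⟩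
  rw [segment_symm]
  convert inv_sub_smul_smul_sub_smul_mem_segment ((mul_comm _ _).trans_lt hab) a b using 1
  have hden : orient a b c - orient a b d = orient c d b - orient c d a := by unfold orient; ring
  rw [hden]
  ext <;> simp only [Prod.smul_fst, Prod.smul_snd, Prod.fst_sub, Prod.snd_sub, smul_eq_mul] <;>
    unfold orient <;> ring

theorem orient_swap (a b c : ℝ × ℝ) : orient a c b = -orient a b c := by
  unfold orient; ring

theorem orient_rotate (a b c : ℝ × ℝ) : orient b c a = orient a b c := by
  unfold orient; ring

noncomputable def circlePoint (θ : ℝ) : ℝ × ℝ := (cos θ, sin θ)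

theorem circlePoint_periodic : Function.Periodic circlePoint (2 * π) := fun θ => by
  simp only [circlePoint, cos_add_two_pi, sin_add_two_pi]

theorem orient_circlePoint (α β γ : ℝ) :
    orient (circlePoint α) (circlePoint β) (circlePoint γ)
      = 4 * sin ((β - α) / 2) * sin ((γ - α) / 2) * sin ((γ - β) / 2) := by
  obtain ⟨P, rfl⟩ : ∃ P, β = α + 2 * P := ⟨(β - α) / 2, by ring⟩
  obtain ⟨V, rfl⟩ : ∃ V, γ = α + 2 * V := ⟨(γ - α) / 2, by ring⟩
  rw [show (α + 2 * P - α) / 2 = P by ring, show (α + 2 * V - α) / 2 = V by ring,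
    show (α + 2 * V - (α + 2 * P)) / 2 = V - P by ring]
  simp only [orient, circlePoint, cos_add, sin_add, sin_sub, sin_two_mul, cos_two_mul]
  linear_combination
    ((2 * cos P ^ 2 - 1) * (2 * sin V * cos V) - (2 * sin P * cos P) * (2 * cos V ^ 2 - 1)
      + 2 * sin P * cos P - 2 * sin V * cos V) * sin_sq_add_cos_sq α
    + (4 * sin V * cos V) * sin_sq_add_cos_sq P
    - (4 * sin P * cos P) * sin_sq_add_cos_sq V

theorem orient_circlePoint_pos {α β γ : ℝ} (hαβ : α < β) (hβγ : β < γ) (hγα : γ < α + 2 * π) :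
    0 < orient (circlePoint α) (circlePoint β) (circlePoint γ) := by
  have sin_half_pos : ∀ {x y : ℝ}, x < y → y < x + 2 * π → 0 < sin ((y - x) / 2) :=
    fun hxy hyx => sin_pos_of_pos_of_lt_pi (by linarith) (by linarith)
  rw [orient_circlePoint]
  exact mul_pos (mul_pos (mul_pos four_pos (sin_half_pos hαβ (by linarith)))
    (sin_half_pos (hαβ.trans hβγ) hγα)) (sin_half_pos hβγ (by linarith))

theorem segment_circlePoint_inter_nonempty {θ₁ θ₂ θ₃ θ₄ : ℝ} (h₁₂ : θ₁ < θ₂) (h₂₃ : θ₂ < θ₃)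
    (h₃₄ : θ₃ < θ₄) (h₄₁ : θ₄ < θ₁ + 2 * π) :
    (segment ℝ (circlePoint θ₁) (circlePoint θ₃) ∩
      segment ℝ (circlePoint θ₂) (circlePoint θ₄)).Nonempty := by
  apply segment_inter_nonempty_of_orient_mul_neg
  · rw [orient_swap]
    exact mul_neg_of_neg_of_pos (neg_neg_of_pos (orient_circlePoint_pos h₁₂ h₂₃ (by linarith)))
      (orient_circlePoint_pos (h₁₂.trans h₂₃) h₃₄ h₄₁)
  · rw [orient_rotate, orient_swap (circlePoint θ₂)]
    exact mul_neg_of_pos_of_neg (orient_circlePoint_pos h₁₂ (h₂₃.trans h₃₄) h₄₁)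
      (neg_neg_of_pos (orient_circlePoint_pos h₂₃ h₃₄ (by linarith)))

noncomputable def polygonVertex (N t : ℕ) : ℝ × ℝ := circlePoint (2 * π * t / N)

theorem polygonVertex_mod (N t : ℕ) : polygonVertex N (t % N) = polygonVertex N t := by
  rcases N.eq_zero_or_pos with rfl | hN
  · rw [Nat.mod_zero]
  have hsplit : 2 * π * t / N = 2 * π * (t % N : ℕ) / N + (t / N : ℕ) * (2 * π) := by
    have ht : (t : ℝ) = (t % N : ℕ) + N * (t / N : ℕ) := by
      exact_mod_cast (Nat.mod_add_div t N).symm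
    rw [ht]
    field_simp
  rw [polygonVertex, polygonVertex, hsplit, circlePoint_periodic.nat_mul]

theorem segment_polygonVertex_inter_nonempty {N m J d : ℕ} (hN : N = 2 * m + 1) (hd : 0 < d)
    (hdm : d ≤ m) :
    (segment ℝ (polygonVertex N J) (polygonVertex N (J + m)) ∩
      segment ℝ (polygonVertex N (J + d)) (polygonVertex N (J + d + m))).Nonempty := by
  rcases hdm.lt_or_eq with hdm | rfl
  · have hN₀ : (0 : ℝ) < N := by norm_cast; omega
    have hθ_mono : StrictMono fun t : ℕ => 2 * π * t / N := fun a b hab => by dsimp only; gcongr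
    have hθ_add : 2 * π * (J + N : ℕ) / N = 2 * π * J / N + 2 * π := by push_cast; field_simp
    refine segment_circlePoint_inter_nonempty (hθ_mono (by omega)) (hθ_mono (by omega))
      (hθ_mono (by omega)) ?_
    rw [← hθ_add]
    exact hθ_mono (by omega)
  · exact ⟨_, right_mem_segment _ _ _, left_mem_segment _ _ _⟩

theorem star_polygon_all_splitters_general (N : ℕ) (hodd : Odd N)
    (p : ZMod N → ℝ × ℝ)
    (hp : ∀ k : ZMod N,
      p k = (Real.cos (2 * π * k.val / N), Real.sin (2 * π * k.val / N)))
    (s : ZMod N → Set (ℝ × ℝ))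
    (hs : ∀ k : ZMod N, s k = segment ℝ (p k) (p (k + (((N - 1) / 2 : ℕ) : ZMod N)))) :
    ∀ j k : ZMod N, j ≠ k → (s j ∩ s k).Nonempty := by
  obtain ⟨m, hm⟩ := hodd
  have : NeZero N := ⟨by omega⟩
  have hs_nat : ∀ t : ℕ, s t = segment ℝ (polygonVertex N t) (polygonVertex N (t + m)) := by
    intro t
    rw [hs, show (N - 1) / 2 = m by omega, ← Nat.cast_add, hp, hp, ZMod.val_natCast,
      ZMod.val_natCast, ← polygonVertex_mod N t, ← polygonVertex_mod N (t + m)]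
    rfl
  intro j k hjk
  wlog hd : (k - j).val ≤ m generalizing j k
  · rw [Set.inter_comm]
    refine this k j hjk.symm ?_
    rw [← neg_sub, ZMod.neg_val, if_neg (sub_ne_zero.mpr hjk.symm)]
    omega
  obtain ⟨J, rfl⟩ : ∃ J : ℕ, (J : ZMod N) = j := ⟨j.val, ZMod.natCast_zmod_val j⟩
  have hk : k = ((J + (k - J).val : ℕ) : ZMod N) := by
    rw [Nat.cast_add, ZMod.natCast_zmod_val]; ring
  generalize (k - J).val = d at hd hk
  subst hk
  have hd0 : d ≠ 0 := by rintro rfl; exact hjk rfl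
  rw [hs_nat, hs_nat]
  exact segment_polygonVertex_inter_nonempty hm (Nat.pos_of_ne_zero hd0) hd

theorem star_polygon_all_splitters (N : ℕ) (hN : 3 ≤ N) (hodd : Odd N)
    (p : ZMod N → ℝ × ℝ)
    (hp : ∀ k : ZMod N,
      p k = (Real.cos (2 * π * k.val / N), Real.sin (2 * π * k.val / N)))
    (s : ZMod N → Set (ℝ × ℝ))
    (hs : ∀ k : ZMod N, s k = segment ℝ (p k) (p (k + (((N - 1) / 2 : ℕ) : ZMod N)))) :
    ∀ j k : ZMod N, j ≠ k → (s j ∩ s k).Nonempty :=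
  star_polygon_all_splitters_general N hodd p hp s hs
end

section
/- Let N ≥ 3 be odd, let p k = (cos(2πk/N), sin(2πk/N)) ∈ ℝ² for k ∈ ZMod N, and for each k ∈ ZMod N let s k = segment ℝ (p k) (p (k + (N−1)/2)). Then the set of points of ℝ² that lie on at least two distinct segments s j, s k (j ≠ k) has exactly N(N−1)/2 elements; in particular every pair of distinct segments meets in exactly one point and no three segments are concurrent except at the corners, each of which lies on exactly two segments. -/
/-!
Chord `k` lies on the line `⟪n_k, x⟫ = d`, where `n_k` is the unit vector at angle
`2πk/N + πm/N` (`m = (N - 1)/2`) and `d = cos (πm/N) > 0`; it is exactly the part of that line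
in the closed unit disk. As `N` is odd, the normals of two distinct chords are never parallel,
so the two lines meet in a single point `x`, and `(1 + ⟪n_j, n_k⟫) ‖x‖² = 2d²`. The angle between
the normals is at most `2πm/N`, so `1 + ⟪n_j, n_k⟫ ≥ 1 + cos (2πm/N) = 2d²` and `x` lies in the
disk. Dually, the normals of the chords through a point `x ≠ 0` lie on the line `⟪x, n⟫ = d`,
which meets the unit circle at most twice: no three chords are concurrent, and the vertices
correspond bijectively to the pairs of chords. A chord meets the circle only at its endpoints,
so each corner lies on exactly two chords.
-/

open Real AffineMap

namespace Plane

-- `ℝ × ℝ` carries the sup norm in Mathlib, so the Euclidean structure is written out by hand.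
def dot (u v : ℝ × ℝ) : ℝ := u.1 * v.1 + u.2 * v.2

def cross (u v : ℝ × ℝ) : ℝ := u.1 * v.2 - u.2 * v.1

lemma dot_comm (u v : ℝ × ℝ) : dot u v = dot v u := by
  simp only [dot]; ring

lemma dot_zero_left (u : ℝ × ℝ) : dot 0 u = 0 := by
  simp [dot]

lemma dot_self_nonneg (v : ℝ × ℝ) : 0 ≤ dot v v :=
  add_nonneg (mul_self_nonneg _) (mul_self_nonneg _)

lemma dot_self_eq_zero {v : ℝ × ℝ} : dot v v = 0 ↔ v = 0 := by
  simp [dot, mul_self_add_mul_self_eq_zero, Prod.ext_iff]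

lemma dot_self_pos {v : ℝ × ℝ} (hv : v ≠ 0) : 0 < dot v v :=
  (dot_self_nonneg v).lt_of_ne (Ne.symm (dot_self_eq_zero.not.2 hv))

lemma cross_sq_add_dot_sq (u v : ℝ × ℝ) : cross u v ^ 2 + dot u v ^ 2 = dot u u * dot v v := by
  simp only [cross, dot]; ring

lemma cross_mul_fst (u v x : ℝ × ℝ) : cross u v * x.1 = dot u x * v.2 - dot v x * u.2 := by
  simp only [cross, dot]; ring

lemma cross_mul_snd (u v x : ℝ × ℝ) : cross u v * x.2 = dot v x * u.1 - dot u x * v.1 := by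
  simp only [cross, dot]; ring

lemma dot_lineMap (n P Q : ℝ × ℝ) (t : ℝ) :
    dot n (lineMap P Q t) = (1 - t) * dot n P + t * dot n Q := by
  simp only [dot, lineMap_apply_module, Prod.fst_add, Prod.snd_add, Prod.smul_fst,
    Prod.smul_snd, smul_eq_mul]
  ring

lemma dot_lineMap_self {P Q : ℝ × ℝ} (hP : dot P P = 1) (hQ : dot Q Q = 1) (t : ℝ) :
    dot (lineMap P Q t) (lineMap P Q t) = 1 - t * (1 - t) * dot (Q - P) (Q - P) := by
  simp only [dot, lineMap_apply_module, Prod.fst_add, Prod.snd_add, Prod.fst_sub, Prod.snd_sub,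
    Prod.smul_fst, Prod.smul_snd, smul_eq_mul] at *
  linear_combination (1 - t) * hP + t * hQ

lemma cross_eq_zero_of_dot_eq_zero {n u v : ℝ × ℝ} (hn : n ≠ 0) (hu : dot n u = 0)
    (hv : dot n v = 0) : cross u v = 0 := by
  have h₁ : n.1 * cross u v = 0 := by
    simp only [dot, cross] at *; linear_combination v.2 * hu - u.2 * hv
  have h₂ : n.2 * cross u v = 0 := by
    simp only [dot, cross] at *; linear_combination u.1 * hv - v.1 * hu
  by_contra h
  exact hn (Prod.ext (by simpa [h] using h₁) (by simpa [h] using h₂))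

lemma exists_lineMap_eq_of_dot_eq {n P Q x : ℝ × ℝ} (hn : n ≠ 0) (hPQ : P ≠ Q)
    (hQ : dot n Q = dot n P) (hx : dot n x = dot n P) : ∃ t : ℝ, lineMap P Q t = x := by
  have hv : dot (Q - P) (Q - P) ≠ 0 := (dot_self_pos (sub_ne_zero.2 hPQ.symm)).ne'
  have hc : cross (x - P) (Q - P) = 0 := by
    refine cross_eq_zero_of_dot_eq_zero hn ?_ ?_ <;>
      simp only [dot, Prod.fst_sub, Prod.snd_sub] at * <;> linarith
  refine ⟨dot (x - P) (Q - P) / dot (Q - P) (Q - P), Prod.ext ?_ ?_⟩ <;>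
    simp only [lineMap_apply_module, Prod.fst_add, Prod.snd_add, Prod.smul_fst, Prod.smul_snd,
      smul_eq_mul] <;>
    field_simp <;>
    simp only [dot, cross, Prod.fst_sub, Prod.snd_sub] at hc hv ⊢
  · linear_combination (P.2 - Q.2) * hc
  · linear_combination (Q.1 - P.1) * hc

lemma lineMap_eq_left_or_right_of_dot_self_eq_one {P Q : ℝ × ℝ} (hP : dot P P = 1)
    (hQ : dot Q Q = 1) {t : ℝ} (ht : dot (lineMap P Q t) (lineMap P Q t) = 1) :
    lineMap P Q t = P ∨ lineMap P Q t = Q := by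
  rw [dot_lineMap_self hP hQ] at ht
  have h : t * (1 - t) * dot (Q - P) (Q - P) = 0 := by linarith
  rcases mul_eq_zero.1 h with h | h
  · rcases mul_eq_zero.1 h with h | h
    · simp [h]
    · simp [show t = 1 by linarith]
  · simp [sub_eq_zero.1 (dot_self_eq_zero.1 h)]

theorem mem_segment_iff_dot_eq {P Q n x : ℝ × ℝ} {d : ℝ} (hP : dot P P = 1) (hQ : dot Q Q = 1)
    (hPQ : P ≠ Q) (hn : n ≠ 0) (hnP : dot n P = d) (hnQ : dot n Q = d) :
    x ∈ segment ℝ P Q ↔ dot n x = d ∧ dot x x ≤ 1 := by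
  rw [segment_eq_image_lineMap]
  constructor
  · rintro ⟨t, ⟨ht₀, ht₁⟩, rfl⟩
    refine ⟨by rw [dot_lineMap, hnP, hnQ]; ring, ?_⟩
    rw [dot_lineMap_self hP hQ]
    have := dot_self_nonneg (Q - P)
    have : 0 ≤ t * (1 - t) := mul_nonneg ht₀ (sub_nonneg.2 ht₁)
    nlinarith
  · rintro ⟨hx, hxx⟩
    obtain ⟨t, rfl⟩ := exists_lineMap_eq_of_dot_eq hn hPQ (hnQ.trans hnP.symm) (hx.trans hnP.symm)
    rw [dot_lineMap_self hP hQ] at hxx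
    have hv := dot_self_pos (sub_ne_zero.2 hPQ.symm)
    have ht : 0 ≤ t * (1 - t) := nonneg_of_mul_nonneg_left (by linarith) hv
    exact ⟨t, ⟨by nlinarith, by nlinarith⟩, rfl⟩

theorem eq_or_eq_of_mem_segment {P Q x : ℝ × ℝ} (hP : dot P P = 1) (hQ : dot Q Q = 1)
    (hx : x ∈ segment ℝ P Q) (hxx : dot x x = 1) : x = P ∨ x = Q := by
  rw [segment_eq_image_lineMap] at hx
  obtain ⟨t, -, rfl⟩ := hx
  exact lineMap_eq_left_or_right_of_dot_self_eq_one hP hQ hxx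

theorem eq_or_eq_of_dot_eq {a b c n : ℝ × ℝ} (ha : dot a a = 1) (hb : dot b b = 1)
    (hc : dot c c = 1) (hab : a ≠ b) (hn : n ≠ 0) (hnb : dot n b = dot n a)
    (hnc : dot n c = dot n a) : c = a ∨ c = b := by
  obtain ⟨t, rfl⟩ := exists_lineMap_eq_of_dot_eq hn hab hnb hnc
  exact lineMap_eq_left_or_right_of_dot_self_eq_one ha hb hc

theorem existsUnique_dot_eq_and_dot_eq {u v : ℝ × ℝ} (huv : cross u v ≠ 0) (a b : ℝ) :
    ∃! x : ℝ × ℝ, dot u x = a ∧ dot v x = b := by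
  refine ⟨((a * v.2 - b * u.2) / cross u v, (b * u.1 - a * v.1) / cross u v), ?_, ?_⟩
  · constructor <;> simp only [dot] <;> field_simp <;> simp only [cross] <;> ring
  · rintro x ⟨hux, hvx⟩
    refine Prod.ext ?_ ?_ <;> rw [eq_div_iff huv, mul_comm]
    · rw [cross_mul_fst, hux, hvx]
    · rw [cross_mul_snd, hux, hvx]

theorem one_add_dot_mul_dot_self {u v x : ℝ × ℝ} {d : ℝ} (hu : dot u u = 1) (hv : dot v v = 1)
    (huv : cross u v ≠ 0) (hux : dot u x = d) (hvx : dot v x = d) :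
    (1 + dot u v) * dot x x = 2 * d ^ 2 := by
  have hlag : cross u v ^ 2 = (1 - dot u v) * (1 + dot u v) := by
    linear_combination cross_sq_add_dot_sq u v + dot v v * hu + hv
  have hsq : (1 - dot u v) * (1 + dot u v) * dot x x = (1 - dot u v) * (2 * d ^ 2) := by
    calc (1 - dot u v) * (1 + dot u v) * dot x x
        = (cross u v * x.1) ^ 2 + (cross u v * x.2) ^ 2 := by rw [← hlag, dot]; ring
      _ = d ^ 2 * (dot u u + dot v v - 2 * dot u v) := by
          rw [cross_mul_fst, cross_mul_snd, hux, hvx]; simp only [dot]; ring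
      _ = (1 - dot u v) * (2 * d ^ 2) := by rw [hu, hv]; ring
  have hne : 1 - dot u v ≠ 0 := by
    intro h
    exact huv (pow_eq_zero_iff two_ne_zero |>.1 (by rw [hlag, h, zero_mul]))
  rw [mul_assoc] at hsq
  exact mul_left_cancel₀ hne hsq

noncomputable def unitVec (θ : Real.Angle) : ℝ × ℝ := (θ.cos, θ.sin)

lemma dot_unitVec (α β : Real.Angle) : dot (unitVec α) (unitVec β) = (β - α).cos := by
  simp only [dot, unitVec, sub_eq_add_neg, Real.Angle.cos_add, Real.Angle.cos_neg,
    Real.Angle.sin_neg]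
  ring

lemma cross_unitVec (α β : Real.Angle) : cross (unitVec α) (unitVec β) = (β - α).sin := by
  simp only [cross, unitVec, sub_eq_add_neg, Real.Angle.sin_add, Real.Angle.cos_neg,
    Real.Angle.sin_neg]
  ring

lemma dot_unitVec_self (θ : Real.Angle) : dot (unitVec θ) (unitVec θ) = 1 := by
  rw [dot_unitVec, sub_self, Real.Angle.cos_zero]

lemma unitVec_ne_zero (θ : Real.Angle) : unitVec θ ≠ 0 := by
  intro h
  simpa [h, dot_zero_left] using dot_unitVec_self θ

lemma unitVec_injective : Function.Injective unitVec := by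
  intro α β h
  have hsin : (β - α).sin = 0 := by rw [← cross_unitVec, h, cross]; ring
  have hcos : (β - α).cos = 1 := by rw [← dot_unitVec, h, dot_unitVec_self]
  rcases Real.Angle.sin_eq_zero_iff.1 hsin with h | h
  · exact (sub_eq_zero.1 h).symm
  · rw [h, Real.Angle.cos_coe_pi] at hcos
    norm_num at hcos

end Plane

section Arrangement

variable {ι α : Type*}

def arrangementVertices (s : ι → Set α) : Set α := {x | ∃ j k, j ≠ k ∧ x ∈ s j ∧ x ∈ s k}

theorem ncard_arrangementVertices [Fintype ι] (s : ι → Set α)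
    (hmeet : ∀ j k, j ≠ k → ∃! x, x ∈ s j ∩ s k)
    (hthree : ∀ x i j k, i ≠ j → i ≠ k → x ∈ s i → x ∈ s j → x ∈ s k → j = k) :
    (arrangementVertices s).ncard = (Fintype.card ι).choose 2 := by
  classical
  have hpair : ∀ x j k, j ≠ k → x ∈ s j → x ∈ s k →
      Finset.univ.filter (fun i => x ∈ s i) = {j, k} := by
    intro x j k hjk hj hk
    ext i
    simp only [Finset.mem_filter, Finset.mem_univ, true_and, Finset.mem_insert,
      Finset.mem_singleton]
    refine ⟨fun hi => or_iff_not_imp_left.2 fun hij => ?_, by rintro (rfl | rfl) <;> assumption⟩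
    exact hthree x j i k (Ne.symm hij) hjk hj hi hk
  rw [← Finset.card_univ, ← Finset.card_powersetCard, ← Set.ncard_coe_finset]
  -- `x ↦ {i | x ∈ s i}` is a bijection onto the two-element subsets of `ι`.
  refine Set.ncard_congr (fun x _ => Finset.univ.filter (fun i => x ∈ s i)) ?_ ?_ ?_
  · rintro x ⟨j, k, hjk, hj, hk⟩
    simp [hpair x j k hjk hj hk, Finset.card_pair hjk]
  · rintro x y ⟨j, k, hjk, hj, hk⟩ - hxy
    have hy : y ∈ s j ∧ y ∈ s k := by
      have hy := Finset.ext_iff.1 hxy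
      simp only [hpair x j k hjk hj hk, Finset.mem_insert, Finset.mem_singleton, Finset.mem_filter,
        Finset.mem_univ, true_and] at hy
      exact ⟨(hy j).1 (.inl rfl), (hy k).1 (.inr rfl)⟩
    exact (hmeet j k hjk).unique ⟨hj, hk⟩ hy
  · intro u hu
    obtain ⟨j, k, hjk, rfl⟩ := Finset.card_eq_two.1 (Finset.mem_powersetCard_univ.1 hu)
    obtain ⟨x, ⟨hj, hk⟩, -⟩ := hmeet j k hjk
    exact ⟨x, ⟨j, k, hjk, hj, hk⟩, hpair x j k hjk hj hk⟩

end Arrangement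

namespace StarPolygon

open Plane

variable {N : ℕ}

/-- The distance from the centre to every chord `starChord N k`. -/
noncomputable def chordDist (N : ℕ) : ℝ := Real.cos (π * (N / 2 : ℕ) / N)

lemma chordDist_pos (hN : Odd N) : 0 < chordDist N := by
  obtain ⟨m, rfl⟩ := hN
  have hm : (2 * m + 1) / 2 = m := by omega
  apply Real.cos_pos_of_mem_Ioo
  rw [hm]
  constructor
  · have : 0 ≤ π * m / ↑(2 * m + 1) := by positivity
    linarith [pi_pos]
  · rw [div_lt_iff₀ (by positivity)]
    push_cast
    nlinarith [pi_pos]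

lemma two_mul_chordDist_sq : 2 * chordDist N ^ 2 = 1 + Real.cos (2 * π * (N / 2 : ℕ) / N) := by
  rw [chordDist, show 2 * π * ((N / 2 : ℕ) : ℝ) / N = 2 * (π * (N / 2 : ℕ) / N) by ring,
    Real.cos_two_mul]
  ring

lemma natCast_half_ne_zero (hN : 1 < N) : ((N / 2 : ℕ) : ZMod N) ≠ 0 := by
  rw [Ne, ZMod.natCast_eq_zero_iff]
  exact fun h => by have := Nat.le_of_dvd (by omega) h; omega

variable [NeZero N]

noncomputable def rootAngle (N : ℕ) [NeZero N] : ZMod N →+ Real.Angle :=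
  (AddCircle.equivAddCircle 1 (2 * π) one_ne_zero two_pi_pos.ne').toAddMonoidHom.comp
    ZMod.toAddCircle

lemma rootAngle_intCast (j : ℤ) : rootAngle N j = ↑(2 * π * j / N) := by
  change AddCircle.equivAddCircle _ _ _ _ (ZMod.toAddCircle (j : ZMod N)) = _
  rw [ZMod.toAddCircle_intCast, AddCircle.equivAddCircle_apply_mk]
  congr 1
  ring

lemma rootAngle_natCast (j : ℕ) : rootAngle N j = ↑(2 * π * j / N) := by
  simpa using rootAngle_intCast (N := N) j

lemma rootAngle_apply (k : ZMod N) : rootAngle N k = ↑(2 * π * k.val / N) := by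
  rw [← rootAngle_natCast, ZMod.natCast_zmod_val]

lemma rootAngle_injective : Function.Injective (rootAngle N) :=
  (AddCircle.equivAddCircle _ _ _ _).injective.comp (ZMod.toAddCircle_injective N)

lemma sin_rootAngle_ne_zero (hN : Odd N) {x : ZMod N} (hx : x ≠ 0) :
    (rootAngle N x).sin ≠ 0 := by
  rw [Real.Angle.sin_ne_zero_iff, ← map_zero (rootAngle N), rootAngle_injective.ne_iff]
  refine ⟨hx, fun hπ => hx ?_⟩
  have h2 : rootAngle N (2 • x) = rootAngle N 0 := by
    rw [map_nsmul, hπ, Real.Angle.two_nsmul_coe_pi, map_zero]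
  have hunit : IsUnit (2 : ZMod N) := by
    exact_mod_cast (ZMod.isUnit_iff_coprime 2 N).2 (Nat.coprime_two_left.2 hN)
  rw [rootAngle_injective.eq_iff, nsmul_eq_mul, Nat.cast_ofNat] at h2
  exact hunit.mul_right_eq_zero.1 h2

lemma cos_le_cos_rootAngle (x : ZMod N) :
    Real.cos (2 * π * (N / 2 : ℕ) / N) ≤ (rootAngle N x).cos := by
  have hN : (0 : ℝ) < N := Nat.cast_pos.2 (NeZero.pos N)
  have hv : |(x.valMinAbs : ℝ)| ≤ (N / 2 : ℕ) := by
    rw [← Int.cast_abs, ← Nat.cast_natAbs, Nat.cast_le]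
    exact ZMod.natAbs_valMinAbs_le x
  have hhalf : ((N / 2 : ℕ) : ℝ) * 2 ≤ N := by exact_mod_cast Nat.div_mul_le_self N 2
  rw [← ZMod.coe_valMinAbs x, rootAngle_intCast, Real.Angle.cos_coe,
    ← Real.cos_abs (2 * π * x.valMinAbs / N)]
  apply Real.cos_le_cos_of_nonneg_of_le_pi (abs_nonneg _)
  · rw [div_le_iff₀ hN]; nlinarith [pi_pos]
  · rw [abs_div, abs_mul, abs_of_pos two_pi_pos, abs_of_pos hN]
    gcongr

/-- The unit normal of the chord `starChord N k`, pointing from the origin to its midpoint. -/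
noncomputable def chordNormal (N : ℕ) [NeZero N] (k : ZMod N) : ℝ × ℝ :=
  unitVec (rootAngle N k + ↑(π * (N / 2 : ℕ) / N))

noncomputable def starChord (N : ℕ) [NeZero N] (k : ZMod N) : Set (ℝ × ℝ) :=
  segment ℝ (unitVec (rootAngle N k)) (unitVec (rootAngle N (k + (N / 2 : ℕ))))

lemma dot_chordNormal_left (k : ZMod N) :
    dot (chordNormal N k) (unitVec (rootAngle N k)) = chordDist N := by
  rw [chordNormal, dot_unitVec, sub_add_cancel_left, Real.Angle.cos_neg, Real.Angle.cos_coe,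
    chordDist]

lemma dot_chordNormal_right (k : ZMod N) :
    dot (chordNormal N k) (unitVec (rootAngle N (k + (N / 2 : ℕ)))) = chordDist N := by
  rw [chordNormal, dot_unitVec, map_add, add_sub_add_left_eq_sub, rootAngle_natCast,
    ← Real.Angle.coe_sub, Real.Angle.cos_coe, chordDist]
  congr 1
  ring

lemma dot_chordNormal_self (k : ZMod N) : dot (chordNormal N k) (chordNormal N k) = 1 :=
  dot_unitVec_self _

lemma cross_chordNormal (j k : ZMod N) :
    cross (chordNormal N j) (chordNormal N k) = (rootAngle N (k - j)).sin := by
  rw [chordNormal, chordNormal, cross_unitVec, add_sub_add_right_eq_sub, map_sub]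

lemma dot_chordNormal (j k : ZMod N) :
    dot (chordNormal N j) (chordNormal N k) = (rootAngle N (k - j)).cos := by
  rw [chordNormal, chordNormal, dot_unitVec, add_sub_add_right_eq_sub, map_sub]

lemma chordNormal_injective : Function.Injective (chordNormal N) :=
  unitVec_injective.comp ((add_left_injective _).comp rootAngle_injective)

theorem mem_starChord_iff (hN : 1 < N) {k : ZMod N} {x : ℝ × ℝ} :
    x ∈ starChord N k ↔ dot (chordNormal N k) x = chordDist N ∧ dot x x ≤ 1 := by
  refine mem_segment_iff_dot_eq (dot_unitVec_self _) (dot_unitVec_self _) ?_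
    (unitVec_ne_zero _) (dot_chordNormal_left k) (dot_chordNormal_right k)
  rw [unitVec_injective.ne_iff, rootAngle_injective.ne_iff, Ne, left_eq_add]
  exact natCast_half_ne_zero hN

theorem existsUnique_mem_starChord_inter (hN : 1 < N) (hodd : Odd N) {j k : ZMod N}
    (hjk : j ≠ k) : ∃! x, x ∈ starChord N j ∩ starChord N k := by
  have hcross : cross (chordNormal N j) (chordNormal N k) ≠ 0 := by
    rw [cross_chordNormal]
    exact sin_rootAngle_ne_zero hodd (sub_ne_zero.2 hjk.symm)
  obtain ⟨x, ⟨hjx, hkx⟩, huniq⟩ :=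
    existsUnique_dot_eq_and_dot_eq hcross (chordDist N) (chordDist N)
  have hnorm := one_add_dot_mul_dot_self (dot_chordNormal_self j) (dot_chordNormal_self k) hcross
    hjx hkx
  have hcos : 2 * chordDist N ^ 2 ≤ 1 + dot (chordNormal N j) (chordNormal N k) := by
    rw [two_mul_chordDist_sq, dot_chordNormal]
    exact add_le_add_right (cos_le_cos_rootAngle (k - j)) 1
  have hpos : 0 < 1 + dot (chordNormal N j) (chordNormal N k) := by
    nlinarith [chordDist_pos hodd]
  have hxx : dot x x ≤ 1 := le_of_mul_le_mul_left (by linarith) hpos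
  simp only [Set.mem_inter_iff, mem_starChord_iff hN]
  exact ⟨x, ⟨⟨hjx, hxx⟩, hkx, hxx⟩, fun y hy => huniq y ⟨hy.1.1, hy.2.1⟩⟩

theorem eq_of_mem_starChord (hN : 1 < N) (hodd : Odd N) {x : ℝ × ℝ} {i j k : ZMod N}
    (hij : i ≠ j) (hik : i ≠ k) (hi : x ∈ starChord N i) (hj : x ∈ starChord N j)
    (hk : x ∈ starChord N k) : j = k := by
  -- The normals of the three chords lie on the line `⟪x, n⟫ = chordDist N`.
  rw [mem_starChord_iff hN, dot_comm] at hi hj hk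
  have hx : x ≠ 0 := by
    rintro rfl
    exact (chordDist_pos hodd).ne' (by simpa [dot_zero_left] using hi.1.symm)
  rcases eq_or_eq_of_dot_eq (dot_chordNormal_self i) (dot_chordNormal_self j)
    (dot_chordNormal_self k) (chordNormal_injective.ne hij) hx (hj.1.trans hi.1.symm)
    (hk.1.trans hi.1.symm) with h | h
  · exact absurd (chordNormal_injective h).symm hik
  · exact (chordNormal_injective h).symm

theorem setOf_unitVec_mem_starChord (k : ZMod N) :
    {i | unitVec (rootAngle N k) ∈ starChord N i} = {k, k - (N / 2 : ℕ)} := by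
  ext i
  simp only [Set.mem_ofPred_eq, Set.mem_insert_iff, Set.mem_singleton_iff]
  constructor
  · intro h
    rcases eq_or_eq_of_mem_segment (dot_unitVec_self _) (dot_unitVec_self _) h
      (dot_unitVec_self _) with h | h
    · exact .inl (rootAngle_injective (unitVec_injective h)).symm
    · exact .inr (eq_sub_of_add_eq (rootAngle_injective (unitVec_injective h)).symm)
  · rintro (rfl | rfl)
    · exact left_mem_segment ℝ _ _
    · rw [starChord, sub_add_cancel]
      exact right_mem_segment ℝ _ _

end StarPolygon

theorem star_polygon_vertex_count (N : ℕ) (hN : 3 ≤ N) (hodd : Odd N)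
    (p : ZMod N → ℝ × ℝ)
    (hp : ∀ k : ZMod N,
      p k = (Real.cos (2 * π * k.val / N), Real.sin (2 * π * k.val / N)))
    (s : ZMod N → Set (ℝ × ℝ))
    (hs : ∀ k : ZMod N, s k = segment ℝ (p k) (p (k + (((N - 1) / 2 : ℕ) : ZMod N)))) :
    {x : ℝ × ℝ | ∃ j k : ZMod N, j ≠ k ∧ x ∈ s j ∧ x ∈ s k}.ncard = N * (N - 1) / 2 ∧
    (∀ j k : ZMod N, j ≠ k → ∃! x : ℝ × ℝ, x ∈ s j ∩ s k) ∧
    (∀ x : ℝ × ℝ, ¬ ∃ i j k : ZMod N, i ≠ j ∧ j ≠ k ∧ i ≠ k ∧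
      x ∈ s i ∧ x ∈ s j ∧ x ∈ s k) ∧
    (∀ k : ZMod N, {i : ZMod N | p k ∈ s i}.ncard = 2) := by
  have : NeZero N := ⟨by omega⟩
  have hN' : 1 < N := by omega
  have hhalf : (N - 1) / 2 = N / 2 := by obtain ⟨m, rfl⟩ := hodd; omega
  obtain rfl : p = fun k => Plane.unitVec (StarPolygon.rootAngle N k) := by
    funext k
    rw [hp, StarPolygon.rootAngle_apply, Plane.unitVec, Real.Angle.cos_coe, Real.Angle.sin_coe]
  obtain rfl : s = StarPolygon.starChord N := by
    funext k
    rw [hs, hhalf]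
    rfl
  have hthree {x : ℝ × ℝ} {i j k : ZMod N} := @StarPolygon.eq_of_mem_starChord N _ hN' hodd x i j k
  refine ⟨?_, fun j k => StarPolygon.existsUnique_mem_starChord_inter hN' hodd, ?_, fun k => ?_⟩
  · have := ncard_arrangementVertices (StarPolygon.starChord N)
      (fun j k => StarPolygon.existsUnique_mem_starChord_inter hN' hodd) (fun _ _ _ _ => hthree)
    rwa [ZMod.card, Nat.choose_two_right] at this
  · rintro x ⟨i, j, k, hij, hjk, hik, hi, hj, hk⟩
    exact hjk (hthree hij hik hi hj hk)
  · rw [StarPolygon.setOf_unitVec_mem_starChord, Set.ncard_pair]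
    exact fun h => StarPolygon.natCast_half_ne_zero hN' (sub_eq_self.1 h.symm)
end

section
/- Let N ≥ 4 be an even natural number and let p : ZMod N → ℝ² be points such that no three of the points p i are collinear. Suppose the segment segment ℝ (p i) (p (i+1)) is a splitter, i.e. it intersects segment ℝ (p j) (p (j+1)) for every j ≠ i. Then the line through p i and p (i+1) separates the corners by parity: there is a sign ε ∈ {−1, +1} such that for every j ∈ ZMod N with p j ∉ {p i, p (i+1)}, the cross product (p (i+1) − p i) × (p j − p i) = (p (i+1) − p i).1 · (p j − p i).2 − (p (i+1) − p i).2 · (p j − p i).1 is strictly positive when j − i is even and ε = +1 (and strictly negative when j − i is odd and ε = +1, with the two cases exchanged when ε = −1). Equivalently, all corners p j with j − i even lie strictly on one open side of the line through p i and p (i+1), and all corners with j − i odd lie strictly on the other open side. -/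
/-- The cross product `(b − a) × (x − a)` of planar vectors, determining on which
open side of the line through `a` and `b` the point `x` lies. -/
def cross (a b x : ℝ × ℝ) : ℝ :=
  (b - a).1 * (x - a).2 - (b - a).2 * (x - a).1

/-!
Every segment `p j p (j+1)` with `j ≠ i` meets the segment `p i p (i+1)`, hence the line
through it, so its two endpoints lie weakly on opposite sides of that line. By general position
no corner other than `p i`, `p (i+1)` lies on the line, so the side strictly alternates along
the path `p (i+2), p (i+3), …, p (i+N-1)`, which is exactly the parity of `j - i`.
-/

lemma cross_self_left (a b : ℝ × ℝ) : cross a b a = 0 := by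
  simp [cross]

lemma cross_self_right (a b : ℝ × ℝ) : cross a b b = 0 := by
  simp [cross, mul_comm]

lemma cross_smul_add_smul (a b u v : ℝ × ℝ) {s t : ℝ} (hst : s + t = 1) :
    cross a b (s • u + t • v) = s * cross a b u + t * cross a b v := by
  obtain rfl : t = 1 - s := by linarith
  simp only [cross, Prod.fst_sub, Prod.snd_sub, Prod.fst_add, Prod.snd_add,
    Prod.smul_fst, Prod.smul_snd, smul_eq_mul]
  ring

lemma cross_eq_zero_of_mem_segment {a b x : ℝ × ℝ} (hx : x ∈ segment ℝ a b) :
    cross a b x = 0 := by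
  obtain ⟨s, t, -, -, hst, rfl⟩ := hx
  simp [cross_smul_add_smul a b a b hst, cross_self_left, cross_self_right]

lemma collinear_of_cross_eq_zero {a b x : ℝ × ℝ} (h : cross a b x = 0) :
    Collinear ℝ ({a, b, x} : Set (ℝ × ℝ)) := by
  rcases eq_or_ne b a with rfl | hba
  · simpa using collinear_pair ℝ b x
  set d := b - a
  have hd : d.1 ^ 2 + d.2 ^ 2 ≠ 0 := by
    intro h0
    apply hba
    rw [← sub_eq_zero]
    ext <;> simp only [Prod.fst_zero, Prod.snd_zero] <;> nlinarith [sq_nonneg d.1, sq_nonneg d.2]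
  -- `x` is the orthogonal projection of itself onto the line `a b`
  have hx :
      AffineMap.lineMap a b (((x - a).1 * d.1 + (x - a).2 * d.2) / (d.1 ^ 2 + d.2 ^ 2)) = x := by
    rw [AffineMap.lineMap_apply, vsub_eq_sub, vadd_eq_add, ← eq_sub_iff_add_eq]
    set e := x - a
    have hc : d.1 * e.2 - d.2 * e.1 = 0 := h
    ext <;> simp only [Prod.smul_fst, Prod.smul_snd, smul_eq_mul] <;> field_simp
    · linear_combination d.2 * hc
    · linear_combination (-d.1) * hc
  refine collinear_triple_of_mem_affineSpan_pair (left_mem_affineSpan_pair ℝ a b)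
    (right_mem_affineSpan_pair ℝ a b) ?_
  rw [← hx]
  exact AffineMap.lineMap_mem_affineSpan_pair _ a b

lemma cross_mul_cross_nonpos {a b u v : ℝ × ℝ}
    (h : (segment ℝ u v ∩ segment ℝ a b).Nonempty) : cross a b u * cross a b v ≤ 0 := by
  obtain ⟨x, ⟨s, t, hs, ht, hst, rfl⟩, hx⟩ := h
  have h0 := cross_eq_zero_of_mem_segment hx
  rw [cross_smul_add_smul a b u v hst] at h0
  have key : cross a b u * cross a b v = -(t * cross a b v ^ 2 + s * cross a b u ^ 2) := by
    linear_combination (cross a b v + cross a b u) * h0 - cross a b u * cross a b v * hst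
  rw [key, neg_nonpos]
  positivity

lemma exists_sign_of_mul_succ_neg {f : ℕ → ℝ} {a n : ℕ} (ha : f a ≠ 0)
    (h : ∀ m, a ≤ m → m + 1 < n → f m * f (m + 1) < 0) :
    ∃ ε : ℝ, (ε = 1 ∨ ε = -1) ∧
      ∀ m, a ≤ m → m < n → 0 < (-1) ^ m * ε * f m := by
  obtain ⟨ε, hε, hεa⟩ : ∃ ε : ℝ, (ε = 1 ∨ ε = -1) ∧ 0 < (-1) ^ a * ε * f a := by
    rcases (mul_ne_zero (pow_ne_zero a (neg_ne_zero.mpr one_ne_zero)) ha).lt_or_gt with h | h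
    · exact ⟨-1, Or.inr rfl, by linarith⟩
    · exact ⟨1, Or.inl rfl, by linarith⟩
  refine ⟨ε, hε, fun m ham => ?_⟩
  induction m, ham using Nat.le_induction with
  | base => exact fun _ => hεa
  | succ m ham ih =>
    intro hm
    have hε2 : ε * ε = 1 := by rcases hε with rfl | rfl <;> norm_num
    have hsq : ((-1 : ℝ) ^ m) ^ 2 = 1 := by rw [← pow_mul, mul_comm, pow_mul]; norm_num
    have hprod :
        ((-1) ^ m * ε * f m) * ((-1) ^ (m + 1) * ε * f (m + 1)) = -(f m * f (m + 1)) := by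
      rw [pow_succ]
      linear_combination (-(f m * f (m + 1))) * (((-1 : ℝ) ^ m) ^ 2 * hε2 + hsq)
    exact (pos_iff_pos_of_mul_pos (hprod ▸ neg_pos.mpr (h m ham hm))).mp (ih (by omega))

lemma add_natCast_ne_add_natCast {N : ℕ} (i : ZMod N) {m n : ℕ} (hm : m < N) (hn : n < N)
    (hmn : m ≠ n) : i + (m : ZMod N) ≠ i + n :=
  fun h => hmn (CharP.natCast_injOn_Iio (ZMod N) N hm hn (add_left_cancel h))

section Corners

variable {N : ℕ} {p : ZMod N → ℝ × ℝ} {i : ZMod N}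

lemma cross_corner_ne_zero
    (hgen : ∀ i j k : ZMod N, i ≠ j → j ≠ k → i ≠ k →
      ¬ Collinear ℝ ({p i, p j, p k} : Set (ℝ × ℝ)))
    {m : ℕ} (h2 : 2 ≤ m) (hm : m < N) :
    cross (p i) (p (i + 1)) (p (i + m)) ≠ 0 := by
  refine fun h0 => hgen i (i + 1) (i + m) ?_ ?_ ?_ (collinear_of_cross_eq_zero h0)
  · simpa using add_natCast_ne_add_natCast i (m := 0) (n := 1) (by omega) (by omega) (by omega)
  · simpa using add_natCast_ne_add_natCast i (m := 1) (by omega) hm (by omega)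
  · simpa using add_natCast_ne_add_natCast i (m := 0) (by omega) hm (by omega)

lemma cross_corner_mul_succ_neg
    (hgen : ∀ i j k : ZMod N, i ≠ j → j ≠ k → i ≠ k →
      ¬ Collinear ℝ ({p i, p j, p k} : Set (ℝ × ℝ)))
    (hsplit : ∀ j : ZMod N, j ≠ i →
      (segment ℝ (p j) (p (j + 1)) ∩ segment ℝ (p i) (p (i + 1))).Nonempty)
    {m : ℕ} (h2 : 2 ≤ m) (hm : m + 1 < N) :
    cross (p i) (p (i + 1)) (p (i + m)) * cross (p i) (p (i + 1)) (p (i + (m + 1 : ℕ))) < 0 := by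
  have hne : i + m ≠ i := by
    simpa using add_natCast_ne_add_natCast i (n := 0) (by omega) (by omega) (by omega)
  have hle := cross_mul_cross_nonpos (hsplit (i + m) hne)
  rw [show i + m + 1 = i + ((m + 1 : ℕ) : ZMod N) by push_cast; ring] at hle
  exact hle.lt_of_ne (mul_ne_zero (cross_corner_ne_zero (m := m) hgen h2 (by omega))
    (cross_corner_ne_zero hgen (by omega) hm))

end Corners

theorem splitter_separates_parities_general (N : ℕ) (hN : 4 ≤ N)
    (p : ZMod N → ℝ × ℝ)
    (hgen : ∀ i j k : ZMod N, i ≠ j → j ≠ k → i ≠ k →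
      ¬ Collinear ℝ ({p i, p j, p k} : Set (ℝ × ℝ)))
    (i : ZMod N)
    (hsplit : ∀ j : ZMod N, j ≠ i →
      (segment ℝ (p j) (p (j + 1)) ∩ segment ℝ (p i) (p (i + 1))).Nonempty) :
    ∃ ε : ℝ, (ε = 1 ∨ ε = -1) ∧
      ∀ j : ZMod N, p j ∉ ({p i, p (i + 1)} : Set (ℝ × ℝ)) →
        ((Even (j - i).val → 0 < ε * cross (p i) (p (i + 1)) (p j)) ∧
         (¬ Even (j - i).val → ε * cross (p i) (p (i + 1)) (p j) < 0)) := by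
  have : NeZero N := ⟨by omega⟩
  obtain ⟨ε, hε, hsign⟩ := exists_sign_of_mul_succ_neg
    (f := fun m : ℕ => cross (p i) (p (i + 1)) (p (i + m))) (a := 2) (n := N)
    (cross_corner_ne_zero hgen le_rfl (by omega))
    (fun m h2 hm => cross_corner_mul_succ_neg hgen hsplit h2 hm)
  refine ⟨ε, hε, fun j hj => ?_⟩
  set m := (j - i).val
  have hj_eq : j = i + m := by simp [m]
  have h2 : 2 ≤ m := by
    by_contra! hlt
    obtain hm | hm : m = 0 ∨ m = 1 := by omega
    all_goals exact hj (by simp [hj_eq, hm])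
  have hpos := hsign m h2 (ZMod.val_lt _)
  rw [← hj_eq] at hpos
  constructor
  · intro he
    simpa [he.neg_one_pow] using hpos
  · intro ho
    simpa [(Nat.not_even_iff_odd.mp ho).neg_one_pow] using hpos

theorem splitter_separates_parities (N : ℕ) (hN : 4 ≤ N) (heven : Even N)
    (p : ZMod N → ℝ × ℝ)
    (hgen : ∀ i j k : ZMod N, i ≠ j → j ≠ k → i ≠ k →
      ¬ Collinear ℝ ({p i, p j, p k} : Set (ℝ × ℝ)))
    (i : ZMod N)
    (hsplit : ∀ j : ZMod N, j ≠ i →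
      (segment ℝ (p j) (p (j + 1)) ∩ segment ℝ (p i) (p (i + 1))).Nonempty) :
    ∃ ε : ℝ, (ε = 1 ∨ ε = -1) ∧
      ∀ j : ZMod N, p j ∉ ({p i, p (i + 1)} : Set (ℝ × ℝ)) →
        ((Even (j - i).val → 0 < ε * cross (p i) (p (i + 1)) (p j)) ∧
         (¬ Even (j - i).val → ε * cross (p i) (p (i + 1)) (p j) < 0)) :=
  splitter_separates_parities_general N hN p hgen i hsplit
end

section
/- Let N ≥ 4 be an even natural number and let p : ZMod N → ℝ² be points such that no three of the points p i are collinear. Then the number of unordered pairs {i, j} of distinct indices in ZMod N for which segment ℝ (p i) (p (i+1)) and segment ℝ (p j) (p (j+1)) have nonempty intersection is at most (N² − 2N + 2)/2. -/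
/-!
Call an edge full if its segment meets every other segment. Along a full edge `i` the
vertices `p (i + 2), …, p (i - 1)` lie alternately on the two sides of its line, since each
edge joining two consecutive ones crosses it; for even `N` the side of `p x` is thus governed
by the parity of `x`. Adjacent edges `a`, `a + 1` cannot both be full: that would put `p a`
and `p (a + 3)` on opposite sides of the line of edge `a + 1`, whereas edges `a` and `a + 2`
cross. Nor can three pairwise non-adjacent edges: for properly crossing segments `[x₀, x₁]`
and `[y₀, y₁]`, the side of `y₀` relative to the first times the side of `x₀` relative to
the second is negative, so the product over the three pairs is negative, while the parity
rule makes it positive. Hence at most two edges are full; each of the other `N - 2` misses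
some edge, and a missing pair serves two edges, so at least `(N - 2) / 2` of the
`N (N - 1) / 2` pairs do not meet.
-/

open Finset

lemma neg_one_pow_mul_mul_pos {f : ℕ → ℝ} {n : ℕ} (h0 : f 0 ≠ 0)
    (h : ∀ t < n, f t * f (t + 1) < 0) : ∀ t ≤ n, 0 < (-1) ^ t * (f 0 * f t)
  | 0, _ => by simpa using mul_self_pos.mpr h0
  | t + 1, ht => by
    have ih := neg_one_pow_mul_mul_pos h0 h t (by omega)
    have hstep := h t (by omega)
    have : 0 < f t ^ 2 * ((-1) ^ (t + 1) * (f 0 * f (t + 1))) := by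
      have e : f t ^ 2 * ((-1) ^ (t + 1) * (f 0 * f (t + 1)))
          = (-1) ^ t * (f 0 * f t) * -(f t * f (t + 1)) := by ring
      rw [e]; exact mul_pos ih (neg_pos.mpr hstep)
    exact pos_of_mul_pos_right this (sq_nonneg _)

lemma ZMod.neg_one_pow_val_add {N : ℕ} [NeZero N] (hN : Even N) (x y : ZMod N) :
    (-1 : ℝ) ^ (x + y).val = (-1) ^ x.val * (-1) ^ y.val := by
  conv_rhs => rw [← pow_add, ← Nat.mod_add_div (x.val + y.val) N, pow_add, pow_mul,
    hN.neg_one_pow, one_pow, mul_one]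
  rw [ZMod.val_add]

lemma ZMod.add_natCast_ne {N : ℕ} (i : ZMod N) {s : ℕ} (h2 : 2 ≤ s) (hs : s < N) :
    i + s ≠ i ∧ i + s ≠ i + 1 := by
  constructor
  · simpa using (ZMod.natCast_eq_zero_iff s N).not.mpr (Nat.not_dvd_of_pos_of_lt (by omega) hs)
  · rw [Ne, add_right_inj, ← Nat.cast_one, ZMod.natCast_eq_natCast_iff', Nat.mod_eq_of_lt hs,
      Nat.mod_eq_of_lt (by omega)]
    omega

lemma SimpleGraph.two_mul_ncard_edgeSet_add_le {V : Type*} [Finite V] (G : SimpleGraph V)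
    {k : ℕ} (hk : {v | G.IsUniversal v}.ncard ≤ k) :
    2 * G.edgeSet.ncard + (Nat.card V - k) ≤ Nat.card V * (Nat.card V - 1) := by
  classical
  have := Fintype.ofFinite V
  rw [Set.ncard_eq_toFinset_card', Set.toFinset_ofPred] at hk
  rw [← G.coe_edgeFinset, Set.ncard_coe_finset, Nat.card_eq_fintype_card]
  have hsplit := Finset.card_filter_add_card_filter_not (s := Finset.univ) G.IsUniversal
  have hdeg : ∀ v, G.degree v + (if ¬ G.IsUniversal v then 1 else 0) ≤ Fintype.card V - 1 := by
    intro v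
    split_ifs with hv
    · exact ((G.degree_eq_card_sub_one v).mpr hv).le
    · exact (G.degree_lt_card_sub_one v).mpr hv
  calc 2 * #G.edgeFinset + (Fintype.card V - k)
      ≤ ∑ v, G.degree v + #{v | ¬ G.IsUniversal v} := by
        rw [G.sum_degrees_eq_twice_card_edges, Finset.card_univ] at *; omega
    _ = ∑ v, (G.degree v + if ¬ G.IsUniversal v then 1 else 0) := by
        rw [Finset.card_filter, Finset.sum_add_distrib]
    _ ≤ ∑ _v : V, (Fintype.card V - 1) := Finset.sum_le_sum fun v _ => hdeg v
    _ = Fintype.card V * (Fintype.card V - 1) := by simp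

namespace CycleCrossing

-- twice the oriented area of the triangle `x y z`
def signedArea (x y z : ℝ × ℝ) : ℝ :=
  (y.1 - x.1) * (z.2 - x.2) - (y.2 - x.2) * (z.1 - x.1)

lemma signedArea_rotate (x y z : ℝ × ℝ) : signedArea x y z = signedArea y z x := by
  unfold signedArea; ring

lemma signedArea_add_smul {a b : ℝ} (hab : a + b = 1) (x y u v : ℝ × ℝ) :
    signedArea x y (a • u + b • v) = a * signedArea x y u + b * signedArea x y v := by
  obtain rfl : a = 1 - b := by linarith
  simp only [signedArea, Prod.fst_add, Prod.snd_add, Prod.smul_fst, Prod.smul_snd, smul_eq_mul]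
  ring

lemma signedArea_eq_zero_of_mem_segment {x y w : ℝ × ℝ} (hw : w ∈ segment ℝ x y) :
    signedArea x y w = 0 := by
  obtain ⟨a, b, -, -, hab, rfl⟩ := hw
  rw [signedArea_add_smul hab]
  simp only [signedArea]; ring

lemma collinear_of_signedArea_eq_zero {x y z : ℝ × ℝ} (h : signedArea x y z = 0) :
    Collinear ℝ ({x, y, z} : Set (ℝ × ℝ)) := by
  rcases eq_or_ne x y with rfl | hxy
  · simpa using collinear_pair ℝ x z
  have hv : 0 < (y.1 - x.1) ^ 2 + (y.2 - x.2) ^ 2 := by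
    by_contra! hle
    exact hxy (Prod.ext (by nlinarith) (by nlinarith))
  rw [collinear_iff_of_mem (Set.mem_insert x _)]
  refine ⟨y - x, ?_⟩
  simp only [Set.mem_insert_iff, Set.mem_singleton_iff, forall_eq_or_imp, forall_eq]
  -- the coefficient of the orthogonal projection of `z - x` onto `y - x`
  refine ⟨⟨0, by simp⟩, ⟨1, by simp⟩,
    ((z.1 - x.1) * (y.1 - x.1) + (z.2 - x.2) * (y.2 - x.2)) /
      ((y.1 - x.1) ^ 2 + (y.2 - x.2) ^ 2), ?_⟩
  simp only [signedArea] at h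
  ext <;> simp only [vadd_eq_add, Prod.fst_add, Prod.snd_add, Prod.smul_fst, Prod.smul_snd,
    Prod.fst_sub, Prod.snd_sub, smul_eq_mul] <;> field_simp
  · linear_combination -(y.2 - x.2) * h
  · linear_combination (y.1 - x.1) * h

lemma signedArea_mul_neg_of_mem_segment {x y u v w : ℝ × ℝ} (hxy : w ∈ segment ℝ x y)
    (huv : w ∈ segment ℝ u v) (hu : signedArea x y u ≠ 0) (hv : signedArea x y v ≠ 0) :
    signedArea x y u * signedArea x y v < 0 := by
  obtain ⟨a, b, ha, hb, hab, rfl⟩ := huv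
  have h0 := signedArea_eq_zero_of_mem_segment hxy
  rw [signedArea_add_smul hab] at h0
  refine lt_of_le_of_ne ?_ (mul_ne_zero hu hv)
  by_contra! hpos
  have hsum : a * signedArea x y u ^ 2 + b * (signedArea x y u * signedArea x y v) = 0 := by
    linear_combination signedArea x y u * h0
  have hb0 : b * (signedArea x y u * signedArea x y v) = 0 := by
    nlinarith [mul_nonneg ha (sq_nonneg (signedArea x y u)), mul_nonneg hb hpos.le]
  obtain rfl : b = 0 := (mul_eq_zero.mp hb0).resolve_right hpos.ne'
  obtain rfl : a = 1 := by linarith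
  exact hu (by simpa using hsum)

lemma signedArea_mul_signedArea_nonpos {x₀ x₁ y₀ y₁ : ℝ × ℝ}
    (h : (segment ℝ x₀ x₁ ∩ segment ℝ y₀ y₁).Nonempty) :
    signedArea x₀ x₁ y₀ * signedArea y₀ y₁ x₀ ≤ 0 := by
  obtain ⟨w, ⟨a, b, -, hb, hab, hx⟩, ⟨c, d, -, hd, hcd, hy⟩⟩ := h
  obtain rfl : a = 1 - b := by linarith
  obtain rfl : c = 1 - d := by linarith
  rw [← hy, Prod.ext_iff] at hx
  simp only [Prod.fst_add, Prod.snd_add, Prod.smul_fst, Prod.smul_snd, smul_eq_mul] at hx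
  obtain ⟨e₁, e₂⟩ := hx
  -- With `U = x₁ - x₀`, `V = y₁ - y₀` and `E = 0` the equation of the common point,
  -- the product expands to `(-d (U × V) - U × E) * (b (U × V) + V × E)`.
  set X := (x₁.1 - x₀.1) * (y₁.2 - y₀.2) - (x₁.2 - x₀.2) * (y₁.1 - y₀.1)
  set E₁ := (1 - b) * x₀.1 + b * x₁.1 - ((1 - d) * y₀.1 + d * y₁.1)
  set E₂ := (1 - b) * x₀.2 + b * x₁.2 - ((1 - d) * y₀.2 + d * y₁.2)
  set UE := (x₁.1 - x₀.1) * E₂ - (x₁.2 - x₀.2) * E₁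
  have key : signedArea x₀ x₁ y₀ * signedArea y₀ y₁ x₀ = -(b * d) * X ^ 2 := by
    simp only [signedArea]
    linear_combination ((d * X + UE) * (y₁.2 - y₀.2) + b * X * (x₁.2 - x₀.2)) * e₁
      + (-(d * X + UE) * (y₁.1 - y₀.1) - b * X * (x₁.1 - x₀.1)) * e₂
  rw [key, neg_mul]
  exact neg_nonpos.mpr (mul_nonneg (mul_nonneg hb hd) (sq_nonneg X))

section Polygon

variable {N : ℕ} (p : ZMod N → ℝ × ℝ)

-- vertex `i` stands for the edge from `p i` to `p (i + 1)`
def crossingGraph : SimpleGraph (ZMod N) where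
  Adj i j := i ≠ j ∧ (segment ℝ (p i) (p (i + 1)) ∩ segment ℝ (p j) (p (j + 1))).Nonempty
  symm := ⟨fun _ _ h => ⟨h.1.symm, Set.inter_comm _ _ ▸ h.2⟩⟩
  loopless := ⟨fun _ h => h.1 rfl⟩

def side (i x : ZMod N) : ℝ := signedArea (p i) (p (i + 1)) (p x)

variable {p}

lemma edgeSet_crossingGraph :
    (crossingGraph p).edgeSet = {e : Sym2 (ZMod N) | ∃ i j : ZMod N, e = s(i, j) ∧ i ≠ j ∧
      (segment ℝ (p i) (p (i + 1)) ∩ segment ℝ (p j) (p (j + 1))).Nonempty} := by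
  ext e
  induction e using Sym2.ind with
  | _ x y =>
  simp only [SimpleGraph.mem_edgeSet, Set.mem_ofPred_eq]
  constructor
  · exact fun h => ⟨x, y, rfl, h⟩
  · rintro ⟨i, j, he, hij⟩
    rcases Sym2.eq_iff.mp he with ⟨rfl, rfl⟩ | ⟨rfl, rfl⟩
    · exact hij
    · exact SimpleGraph.Adj.symm (G := crossingGraph p) hij

variable (hp : ∀ i j k, i ≠ j → j ≠ k → i ≠ k → signedArea (p i) (p j) (p k) ≠ 0)
include hp

lemma side_ne_zero [Fact (1 < N)] {i x : ZMod N} (hx : x ≠ i) (hx' : x ≠ i + 1) :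
    side p i x ≠ 0 :=
  hp i (i + 1) x (by simp) (Ne.symm hx') (Ne.symm hx)

lemma side_mul_side_succ_neg [Fact (1 < N)] {i j : ZMod N} (hij : (crossingGraph p).Adj i j)
    (hj : j ≠ i + 1) (hj' : j + 1 ≠ i) : side p i j * side p i (j + 1) < 0 := by
  obtain ⟨w, hwi, hwj⟩ := hij.2
  exact signedArea_mul_neg_of_mem_segment hwi hwj (side_ne_zero hp hij.1.symm hj)
    (side_ne_zero hp hj' (by simpa using hij.1.symm))

lemma side_mul_side_neg [Fact (1 < N)] {i j : ZMod N} (hij : (crossingGraph p).Adj i j)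
    (hj : j ≠ i + 1) (hi : i ≠ j + 1) : side p i j * side p j i < 0 :=
  lt_of_le_of_ne (signedArea_mul_signedArea_nonpos hij.2)
    (mul_ne_zero (side_ne_zero hp hij.1.symm hj) (side_ne_zero hp hij.1 hi))

lemma neg_one_pow_val_mul_side_mul_pos (hN : 3 ≤ N) (heven : Even N) {i x y : ZMod N}
    (hi : (crossingGraph p).IsUniversal i) (hx : x ≠ i) (hx' : x ≠ i + 1)
    (hy : y ≠ i) (hy' : y ≠ i + 1) :
    0 < (-1) ^ x.val * side p i x * ((-1) ^ y.val * side p i y) := by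
  have : Fact (1 < N) := ⟨by omega⟩
  set f : ℕ → ℝ := fun t => side p i (i + (t + 2 : ℕ))
  have hf0 : f 0 ≠ 0 := by
    obtain ⟨h, h'⟩ := ZMod.add_natCast_ne i (s := 2) le_rfl (by omega)
    exact side_ne_zero hp h h'
  have hf : ∀ t < N - 3, f t * f (t + 1) < 0 := by
    intro t ht
    obtain ⟨h, h'⟩ := ZMod.add_natCast_ne i (s := t + 2) (by omega) (by omega)
    have hsucc : i + ((t + 2 : ℕ) : ZMod N) + 1 = i + ((t + 1 + 2 : ℕ) : ZMod N) := by
      push_cast; ring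
    have := side_mul_side_succ_neg hp (hi (Ne.symm h)) h'
      (hsucc ▸ (ZMod.add_natCast_ne i (s := t + 1 + 2) (by omega) (by omega)).1)
    rwa [hsucc] at this
  have key : ∀ x, x ≠ i → x ≠ i + 1 →
      0 < (-1) ^ x.val * side p i x * ((-1) ^ i.val * f 0) := by
    intro x hx hx'
    have hxi : x = i + ((x - i).val : ZMod N) := by rw [ZMod.natCast_zmod_val]; ring
    have h0 : (x - i).val ≠ 0 := fun h => hx (by rw [hxi, h]; simp)
    have h1 : (x - i).val ≠ 1 := fun h => hx' (by rw [hxi, h]; simp)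
    obtain ⟨t, ht⟩ : ∃ t, (x - i).val = t + 2 := ⟨(x - i).val - 2, by omega⟩
    have hsign : (-1 : ℝ) ^ x.val = (-1) ^ t * (-1) ^ i.val := by
      rw [← sub_add_cancel x i, ZMod.neg_one_pow_val_add heven, ht, pow_add]; norm_num
    have hpos := neg_one_pow_mul_mul_pos hf0 hf t (by have := ZMod.val_lt (x - i); omega)
    have hfx : side p i x = f t := by rw [hxi, ht]
    rw [hsign, hfx]
    have hsq : ((-1 : ℝ) ^ i.val) ^ 2 = 1 := by rw [pow_right_comm]; norm_num
    calc (0 : ℝ) < (-1) ^ t * (f 0 * f t) * ((-1) ^ i.val) ^ 2 := by rwa [hsq, mul_one]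
      _ = _ := by ring
  have hprod := mul_pos (key x hx hx') (key y hy hy')
  refine pos_of_mul_pos_left (b := ((-1) ^ i.val * f 0) ^ 2) ?_ (sq_nonneg _)
  linear_combination hprod

lemma not_isUniversal_add_one (hN : 4 ≤ N) (heven : Even N) {a : ZMod N}
    (ha : (crossingGraph p).IsUniversal a) : ¬ (crossingGraph p).IsUniversal (a + 1) := by
  intro ha₁
  have : Fact (1 < N) := ⟨by omega⟩
  obtain ⟨h20, h21⟩ : a + 2 ≠ a ∧ a + 2 ≠ a + 1 := by
    simpa using ZMod.add_natCast_ne a (s := 2) le_rfl (by omega)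
  obtain ⟨h30, h31⟩ : a + 3 ≠ a ∧ a + 3 ≠ a + 1 := by
    simpa using ZMod.add_natCast_ne a (s := 3) (by omega) (by omega)
  have h3 : a + 2 + 1 = a + 3 := by ring
  have hadj : (crossingGraph p).Adj a (a + 2) := ha h20.symm
  have hAC := side_mul_side_neg hp hadj h21 (h3 ▸ h30.symm)
  have hCD := side_mul_side_succ_neg hp hadj.symm (h3 ▸ h30.symm) h21.symm
  have h2 : a + 1 + 1 = a + 2 := by ring
  have halt := neg_one_pow_val_mul_side_mul_pos hp (x := a + 3) (y := a) (by omega) heven ha₁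
    h31 (by rw [h2, ← h3]; simp) (by simp) (by rw [h2]; exact h20.symm)
  have hrot₁ : side p (a + 1) (a + 3) = side p (a + 2) (a + 1) := by
    rw [side, side, h2, ← h3, signedArea_rotate]
  have hrot₂ : side p (a + 1) a = side p a (a + 2) := by
    rw [side, side, h2, signedArea_rotate, signedArea_rotate]
  have hsign : (-1 : ℝ) ^ (a + 3).val = -(-1) ^ a.val := by
    rw [ZMod.neg_one_pow_val_add heven, ZMod.val_ofNat_of_lt (show 3 < N by omega)]; ring
  rw [hrot₁, hrot₂, hsign] at halt
  have hDA : side p (a + 2) (a + 1) * side p a (a + 2) < 0 := by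
    have hsq : ((-1 : ℝ) ^ a.val) ^ 2 = 1 := by rw [pow_right_comm]; norm_num
    linear_combination halt - side p (a + 2) (a + 1) * side p a (a + 2) * hsq
  -- three negative products whose product is a square
  have := mul_neg_of_pos_of_neg (mul_pos_of_neg_of_neg hAC hCD) hDA
  nlinarith [sq_nonneg (side p a (a + 2) * side p (a + 2) a * side p (a + 2) (a + 1))]

lemma false_of_three_isUniversal (hN : 3 ≤ N) (heven : Even N) {a b c : ZMod N}
    (ha : (crossingGraph p).IsUniversal a) (hb : (crossingGraph p).IsUniversal b)
    (hc : (crossingGraph p).IsUniversal c) (hab : a ≠ b) (hac : a ≠ c) (hbc : b ≠ c)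
    (hab₁ : a ≠ b + 1) (hba₁ : b ≠ a + 1) (hac₁ : a ≠ c + 1) (hca₁ : c ≠ a + 1)
    (hbc₁ : b ≠ c + 1) (hcb₁ : c ≠ b + 1) : False := by
  have : Fact (1 < N) := ⟨by omega⟩
  have hAB := side_mul_side_neg hp (ha hab) hba₁ hab₁
  have hAC := side_mul_side_neg hp (ha hac) hca₁ hac₁
  have hBC := side_mul_side_neg hp (hb hbc) hcb₁ hbc₁
  have hA := neg_one_pow_val_mul_side_mul_pos hp hN heven ha hab.symm hba₁ hac.symm hca₁
  have hB := neg_one_pow_val_mul_side_mul_pos hp hN heven hb hab hab₁ hbc.symm hcb₁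
  have hC := neg_one_pow_val_mul_side_mul_pos hp hN heven hc hac hac₁ hbc hbc₁
  have hneg := mul_neg_of_pos_of_neg (mul_pos_of_neg_of_neg hAB hAC) hBC
  have hpos := mul_pos (mul_pos hA hB) hC
  have key : (-1) ^ b.val * side p a b * ((-1) ^ c.val * side p a c) *
      ((-1) ^ a.val * side p b a * ((-1) ^ c.val * side p b c)) *
      ((-1) ^ a.val * side p c a * ((-1) ^ b.val * side p c b)) =
      ((-1) ^ a.val * (-1) ^ b.val * (-1) ^ c.val) ^ 2 *
      (side p a b * side p b a * (side p a c * side p c a) * (side p b c * side p c b)) := by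
    ring
  rw [key] at hpos
  exact hpos.not_ge (mul_nonpos_of_nonneg_of_nonpos (sq_nonneg _) hneg.le)

lemma ncard_isUniversal_le_two (hN : 4 ≤ N) (heven : Even N) :
    {i | (crossingGraph p).IsUniversal i}.ncard ≤ 2 := by
  have : NeZero N := ⟨by omega⟩
  by_contra! h
  obtain ⟨a, b, c, ha, hb, hc, hab, hac, hbc⟩ := (Set.two_lt_ncard_iff).mp h
  have hnext {x y : ZMod N} (hx : (crossingGraph p).IsUniversal x)
      (hy : (crossingGraph p).IsUniversal y) : y ≠ x + 1 := by
    rintro rfl; exact not_isUniversal_add_one hp hN heven hx hy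
  exact false_of_three_isUniversal hp (by omega) heven ha hb hc hab hac hbc (hnext hb ha)
    (hnext ha hb) (hnext hc ha) (hnext ha hc) (hnext hc hb) (hnext hb hc)

end Polygon

end CycleCrossing

open CycleCrossing in
theorem intersecting_pairs_bound_even (N : ℕ) (hN : 4 ≤ N) (heven : Even N)
    (p : ZMod N → ℝ × ℝ)
    (hgen : ∀ i j k : ZMod N, i ≠ j → j ≠ k → i ≠ k →
      ¬ Collinear ℝ ({p i, p j, p k} : Set (ℝ × ℝ))) :
    {e : Sym2 (ZMod N) | ∃ i j : ZMod N, e = s(i, j) ∧ i ≠ j ∧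
      (segment ℝ (p i) (p (i + 1)) ∩ segment ℝ (p j) (p (j + 1))).Nonempty}.ncard
      ≤ (N ^ 2 - 2 * N + 2) / 2 := by
  have hp : ∀ i j k, i ≠ j → j ≠ k → i ≠ k → signedArea (p i) (p j) (p k) ≠ 0 :=
    fun i j k hij hjk hik h => hgen i j k hij hjk hik (collinear_of_signedArea_eq_zero h)
  have : NeZero N := ⟨by omega⟩
  have hbound := (crossingGraph p).two_mul_ncard_edgeSet_add_le
    (ncard_isUniversal_le_two hp hN heven)
  rw [Nat.card_zmod, edgeSet_crossingGraph] at hbound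
  have hsq : N ^ 2 = N * (N - 1) + N := by
    obtain ⟨m, rfl⟩ : ∃ m, N = m + 1 := ⟨N - 1, by omega⟩
    simp only [Nat.add_sub_cancel]; ring
  rw [Nat.le_div_iff_mul_le two_pos]
  omega
end

section
/- Let N ≥ 4 be an even natural number. Then there exist points p : ZMod N → ℝ², no three of which are collinear, such that exactly two of the segments segment ℝ (p i) (p (i+1)) are splitters (intersect all N−1 other segments), each of the remaining N−2 segments intersects exactly N−2 of the other segments (is a one-off splitter), and the set of points of ℝ² lying on at least two distinct segments has exactly (N² − 2N + 2)/2 elements (i.e., no point lies on three or more segments except that each corner lies on its two incident segments). -/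
/-- The `i`-th line-segment of the straight line embedding of the `N`-cycle
with corners `p`. -/
def cycleSeg (N : ℕ) (p : ZMod N → ℝ × ℝ) (i : ZMod N) : Set (ℝ × ℝ) :=
  segment ℝ (p i) (p (i + 1))

/-- The `i`-th segment is a splitter: it meets every other segment. -/
def IsSplitter (N : ℕ) (p : ZMod N → ℝ × ℝ) (i : ZMod N) : Prop :=
  ∀ j : ZMod N, j ≠ i → (cycleSeg N p j ∩ cycleSeg N p i).Nonempty

/-!
Put the corners on the parabola `y = x²`. A segment is then a chord, and two chords whose
parameter intervals overlap meet exactly when the intervals are not strictly nested. Order the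
corners along the parabola with all even corners to the left of all odd ones, so that every chord
spans the middle, and choose the order so that edge `k` and its mirror image `-k` are the only
strictly nested pairs: segments `i ≠ j` then meet iff `i + j ≠ 0`. Hence the splitters are the
edges `0` and `N / 2`, and every other edge misses exactly its mirror image. Finally, perturb the
positions off the zero set of a nonzero polynomial so that no three pairwise disjoint chords are
concurrent. Every crossing point then lies on exactly two segments, so the crossing points
correspond to the edges of the intersection graph, and the handshake lemma counts them as
`(2 (N - 1) + (N - 2)²) / 2`.
-/

open Set MvPolynomial

def parabola (t : ℝ) : ℝ × ℝ := (t, t ^ 2)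

lemma mem_segment_parabola_iff {a b : ℝ} {q : ℝ × ℝ} :
    q ∈ segment ℝ (parabola a) (parabola b) ↔
      q.1 ∈ uIcc a b ∧ q.2 = (a + b) * q.1 - a * b := by
  rw [← segment_eq_uIcc]
  constructor
  · rintro ⟨u, v, hu, hv, huv, rfl⟩
    refine ⟨⟨u, v, hu, hv, huv, by simp [parabola]⟩, ?_⟩
    simp only [parabola, Prod.fst_add, Prod.snd_add, Prod.smul_fst, Prod.smul_snd, smul_eq_mul]
    linear_combination (-(a * b)) * huv
  · rintro ⟨⟨u, v, hu, hv, huv, h⟩, h2⟩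
    refine ⟨u, v, hu, hv, huv, Prod.ext ?_ ?_⟩
    · simpa [parabola] using h
    · simp only [parabola, Prod.snd_add, Prod.smul_snd, smul_eq_mul] at h ⊢
      rw [h2, ← h]
      linear_combination (-(a * b)) * huv

lemma parabola_mem_segment_parabola_iff {a b t : ℝ} :
    parabola t ∈ segment ℝ (parabola a) (parabola b) ↔ t = a ∨ t = b := by
  constructor
  · intro h
    have h2 := (mem_segment_parabola_iff.mp h).2
    simp only [parabola] at h2
    have : (t - a) * (t - b) = 0 := by linear_combination h2
    rcases mul_eq_zero.mp this with h | h
    · exact Or.inl (by linarith)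
    · exact Or.inr (by linarith)
  · rintro (rfl | rfl)
    · exact left_mem_segment ℝ _ _
    · exact right_mem_segment ℝ _ _

lemma segment_parabola_inter_subsingleton {a b c d : ℝ} (h₁ : ¬(a = c ∧ b = d))
    (h₂ : ¬(a = d ∧ b = c)) :
    (segment ℝ (parabola a) (parabola b) ∩ segment ℝ (parabola c) (parabola d)).Subsingleton := by
  rintro q ⟨hqab, hqcd⟩ q' ⟨hqab', hqcd'⟩
  rw [mem_segment_parabola_iff] at hqab hqcd hqab' hqcd'
  by_cases hx : q.1 = q'.1
  · exact Prod.ext hx (by rw [hqab.2, hqab'.2, hx])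
  have e₁ : (a + b) * q.1 - a * b = (c + d) * q.1 - c * d := hqab.2.symm.trans hqcd.2
  have e₂ : (a + b) * q'.1 - a * b = (c + d) * q'.1 - c * d := hqab'.2.symm.trans hqcd'.2
  have hsum : a + b = c + d := by
    have : (a + b - (c + d)) * (q.1 - q'.1) = 0 := by linear_combination e₁ - e₂
    rcases mul_eq_zero.mp this with h | h
    · linarith
    · exact absurd (by linarith) hx
  have hprod : a * b = c * d := by linear_combination -e₁ + q.1 * hsum
  have : (a - c) * (a - d) = 0 := by linear_combination a * hsum - hprod
  rcases mul_eq_zero.mp this with h | h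
  · exact absurd ⟨by linarith, by linarith⟩ h₁
  · exact absurd ⟨by linarith, by linarith⟩ h₂

lemma segment_parabola_inter_nonempty {a b c d : ℝ} (hac : a ≤ c) (hcb : c ≤ b) (hbd : b ≤ d) :
    (segment ℝ (parabola a) (parabola b) ∩ segment ℝ (parabola c) (parabola d)).Nonempty := by
  -- the chord lines `y = (a + b) x - a b` and `y = (c + d) x - c d` cross over `[c, b]`
  have h₀ : (0 : ℝ) ∈ Icc ((a + b) * b - a * b - ((c + d) * b - c * d))
      ((a + b) * c - a * b - ((c + d) * c - c * d)) := ⟨by nlinarith, by nlinarith⟩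
  obtain ⟨x, ⟨hcx, hxb⟩, hx⟩ := intermediate_value_Icc' hcb
    (f := fun x => ((a + b) * x - a * b) - ((c + d) * x - c * d)) (by fun_prop) h₀
  refine ⟨(x, (a + b) * x - a * b), ?_, ?_⟩ <;> rw [mem_segment_parabola_iff]
  · exact ⟨mem_uIcc.mpr (Or.inl ⟨hac.trans hcx, hxb⟩), rfl⟩
  · exact ⟨mem_uIcc.mpr (Or.inl ⟨hcx, hxb.trans hbd⟩), by simp only at hx ⊢; linarith⟩

lemma segment_parabola_inter_eq_empty {a b c d : ℝ} (hac : a < c) (hcd : c ≤ d) (hdb : d < b) :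
    segment ℝ (parabola a) (parabola b) ∩ segment ℝ (parabola c) (parabola d) = ∅ := by
  refine eq_empty_of_forall_notMem fun q ⟨hab, hcd'⟩ => ?_
  rw [mem_segment_parabola_iff, uIcc_of_le (by linarith)] at hab
  rw [mem_segment_parabola_iff, uIcc_of_le hcd] at hcd'
  obtain ⟨-, hq⟩ := hab
  obtain ⟨⟨hcq, hqd⟩, hq'⟩ := hcd'
  -- over `[c, d]` the chord line of `(a, b)` lies strictly above that of `(c, d)`
  have key : (a + b) * q.1 - a * b - ((c + d) * q.1 - c * d) =
      (q.1 - a) * (b - q.1) - (q.1 - c) * (d - q.1) := by ring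
  nlinarith [mul_nonneg (sub_nonneg.2 hcq) (sub_nonneg.2 hqd)]

lemma not_collinear_parabola {a b c : ℝ} (hab : a ≠ b) (hac : a ≠ c) (hbc : b ≠ c) :
    ¬ Collinear ℝ ({parabola a, parabola b, parabola c} : Set (ℝ × ℝ)) := by
  rw [collinear_iff_of_mem (mem_insert _ _)]
  rintro ⟨v, hv⟩
  obtain ⟨r, hr⟩ := hv (parabola b) (by simp)
  obtain ⟨s, hs⟩ := hv (parabola c) (by simp)
  simp only [parabola, Prod.ext_iff, vadd_eq_add, Prod.fst_add, Prod.snd_add, Prod.smul_fst,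
    Prod.smul_snd, smul_eq_mul] at hr hs
  have key : (b - a) * (c - a) * (c - b) = 0 := by
    linear_combination (c ^ 2 - a ^ 2) * hr.1 + r * v.1 * hs.2 - (b ^ 2 - a ^ 2) * hs.1
      - s * v.1 * hr.2
  simp only [mul_eq_zero, sub_eq_zero] at key
  grind

/-- The chord of the parabola through `parabola a` and `parabola b` lies on the line
`y = (a + b) x - a b`; `chordDet` is the determinant of the lines of the chords `(a, b)`,
`(c, d)`, `(e, f)`, which vanishes when the three chords are concurrent. -/
def chordDet {R : Type*} [CommRing R] (a b c d e f : R) : R :=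
  a * b * (c + d - (e + f)) + c * d * (e + f - (a + b)) + e * f * (a + b - (c + d))

lemma map_chordDet {R S : Type*} [CommRing R] [CommRing S] (φ : R →+* S) (a b c d e f : R) :
    φ (chordDet a b c d e f) = chordDet (φ a) (φ b) (φ c) (φ d) (φ e) (φ f) := by
  simp [chordDet]

lemma chordDet_eq_zero_of_mem {a b c d e f : ℝ} {q : ℝ × ℝ}
    (hab : q ∈ segment ℝ (parabola a) (parabola b))
    (hcd : q ∈ segment ℝ (parabola c) (parabola d))
    (hef : q ∈ segment ℝ (parabola e) (parabola f)) : chordDet a b c d e f = 0 := by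
  rw [mem_segment_parabola_iff] at hab hcd hef
  unfold chordDet
  linear_combination (c + d - (e + f)) * hab.2 + (e + f - (a + b)) * hcd.2
    + (a + b - (c + d)) * hef.2

lemma chordDet_X_ne_zero {a b c d e f : ℕ} (h : [a, b, c, d, e, f].Nodup) :
    chordDet (X a : MvPolynomial ℕ ℝ) (X b) (X c) (X d) (X e) (X f) ≠ 0 := by
  simp only [List.nodup_cons, List.mem_cons, List.not_mem_nil, or_false, not_or,
    List.nodup_nil, and_true] at h
  obtain ⟨⟨-, -, -, hae, haf⟩, ⟨hbc, hbd, -, -⟩, ⟨hcd, hce, hcf⟩, -⟩ := h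
  intro h0
  -- evaluate where the chords `(a, b)` and `(c, d)` share the endpoint `a`
  have := congrArg (eval fun n => if n = c then (a : ℝ) else n) h0
  simp only [map_chordDet, map_zero, eval_X, ite_self, if_pos, hbc, Ne.symm hcd, Ne.symm hce,
    Ne.symm hcf, if_false] at this
  have hfactor : chordDet (a : ℝ) b a d e f = (b - d) * (a - e) * (a - f) := by
    unfold chordDet; ring
  simp [hfactor, sub_eq_zero, hbd, hae, haf] at this

lemma MvPolynomial.exists_eval_ne_zero_of_infinite {σ R : Type*} [CommRing R] [IsDomain R]
    {P : MvPolynomial σ R} (hP : P ≠ 0) (s : σ → Set R) (hs : ∀ i, (s i).Infinite) :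
    ∃ x ∈ Set.pi univ s, eval x P ≠ 0 := by
  by_contra! h
  exact hP (funext_set s hs fun x hx => by rw [h x hx, map_zero])

lemma strictMono_of_forall_mem_Ioo {σ : ℕ → ℝ}
    (hσ : ∀ n : ℕ, σ n ∈ Ioo (n : ℝ) (n + 1 / 2)) : StrictMono σ :=
  strictMono_nat_of_lt_succ fun n => by
    obtain ⟨-, h₁⟩ := hσ n
    obtain ⟨h₂, -⟩ := hσ (n + 1)
    push_cast at h₂
    linarith

def intersectionGraph {ι α : Type*} (S : ι → Set α) : SimpleGraph ι where
  Adj i j := j ≠ i ∧ (S j ∩ S i).Nonempty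
  symm := ⟨fun _ _ h => ⟨h.1.symm, inter_comm (S _) _ ▸ h.2⟩⟩
  loopless := ⟨fun _ h => h.1 rfl⟩

lemma ncard_setOf_mem_two_eq_ncard_edgeSet {ι α : Type*} {S : ι → Set α}
    (hsub : ∀ i j, i ≠ j → (S i ∩ S j).Subsingleton)
    (hthree : ∀ x i j k, x ∈ S i → x ∈ S j → x ∈ S k → i = j ∨ j = k ∨ i = k) :
    {x | ∃ i j, i ≠ j ∧ x ∈ S i ∧ x ∈ S j}.ncard = (intersectionGraph S).edgeSet.ncard := by
  have hpoint : ∀ e ∈ (intersectionGraph S).edgeSet, ∃ x, ∀ i ∈ e, x ∈ S i := by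
    intro e he
    induction e using Sym2.ind with | _ i j => ?_
    obtain ⟨-, x, hxj, hxi⟩ := he
    exact ⟨x, fun k hk => by rcases Sym2.mem_iff.1 hk with rfl | rfl <;> assumption⟩
  choose pt hpt using hpoint
  symm
  refine ncard_congr pt ?_ ?_ ?_
  · intro e he
    induction e using Sym2.ind with | _ i j => ?_
    exact ⟨i, j, he.1.symm, hpt _ he i (Sym2.mem_mk_left i j),
      hpt _ he j (Sym2.mem_mk_right i j)⟩
  · intro e e' he he' h
    induction e using Sym2.ind with | _ i j => ?_
    induction e' using Sym2.ind with | _ k l => ?_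
    have hi := hpt _ he i (Sym2.mem_mk_left i j)
    have hj := hpt _ he j (Sym2.mem_mk_right i j)
    have hk := hpt _ he' k (Sym2.mem_mk_left k l)
    have hl := hpt _ he' l (Sym2.mem_mk_right k l)
    rw [h] at hi hj
    have hij : i ≠ j := he.1.symm
    have hkl : k ≠ l := he'.1.symm
    rcases hthree _ _ _ _ hi hj hk with h | h | h <;>
    rcases hthree _ _ _ _ hi hj hl with h' | h' | h' <;> grind [Sym2.eq_swap]
  · rintro x ⟨i, j, hij, hi, hj⟩
    have he : s(i, j) ∈ (intersectionGraph S).edgeSet := ⟨hij.symm, x, hj, hi⟩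
    exact ⟨s(i, j), he, hsub i j hij ⟨hpt _ he i (Sym2.mem_mk_left i j),
      hpt _ he j (Sym2.mem_mk_right i j)⟩ ⟨hi, hj⟩⟩

lemma SimpleGraph.sum_ncard_neighborSet {V : Type*} [Fintype V] (G : SimpleGraph V) :
    ∑ v, (G.neighborSet v).ncard = 2 * G.edgeSet.ncard := by
  classical
  simp_rw [← coe_neighborFinset, ← coe_edgeFinset, ncard_coe_finset,
    card_neighborFinset_eq_degree]
  exact G.sum_degrees_eq_twice_card_edges

lemma ZMod.val_add_eq_or {n : ℕ} [NeZero n] (a b : ZMod n) :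
    (a + b).val = a.val + b.val ∨ (a + b).val + n = a.val + b.val := by
  rcases lt_or_ge (a.val + b.val) n with h | h
  · exact Or.inl (ZMod.val_add_of_lt h)
  · exact Or.inr (ZMod.val_add_val_of_le h).symm

lemma ZMod.val_add_one_eq_or {n : ℕ} [Fact (1 < n)] (a : ZMod n) :
    (a + 1).val = a.val + 1 ∨ (a + 1).val + n = a.val + 1 := by
  simpa [ZMod.val_one] using ZMod.val_add_eq_or a 1

lemma ZMod.add_eq_zero_iff_val {n : ℕ} [NeZero n] (a b : ZMod n) :
    a + b = 0 ↔ a.val + b.val = 0 ∨ a.val + b.val = n := by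
  have := ZMod.val_add_eq_or a b
  have := (a + b).val_lt
  rw [← ZMod.val_eq_zero]
  omega

lemma ZMod.ncard_setOf_add_self_eq_zero {N m : ℕ} [NeZero N] (hN : N = 2 * m) :
    {i : ZMod N | i + i = 0}.ncard = 2 := by
  have := NeZero.ne N
  have hmval : (m : ZMod N).val = m := ZMod.val_natCast_of_lt (by omega)
  have : {i : ZMod N | i + i = 0} = {0, (m : ZMod N)} := by
    ext i
    rw [mem_ofPred_eq, ZMod.add_eq_zero_iff_val, mem_insert_iff, mem_singleton_iff,
      ← (ZMod.val_injective N).eq_iff, ← (ZMod.val_injective N).eq_iff, hmval, ZMod.val_zero]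
    omega
  rw [this, ncard_pair]
  intro h
  rw [← (ZMod.val_injective N).eq_iff, ZMod.val_zero, hmval] at h
  omega

lemma ZMod.ncard_compl_pair_neg_add {N : ℕ} [NeZero N] (i : ZMod N) :
    ({i, -i}ᶜ : Set (ZMod N)).ncard + (if i + i = 0 then 1 else 2) = N := by
  have hN := ncard_compl_add_ncard ({i, -i} : Set (ZMod N))
  rw [Nat.card_zmod] at hN
  split_ifs with h
  · rw [neg_eq_of_add_eq_zero_left h, pair_eq_singleton] at hN ⊢
    rwa [ncard_singleton] at hN
  · rwa [ncard_pair fun h' => h (by nth_rw 2 [h']; exact add_neg_cancel i)] at hN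

lemma ZMod.sum_ncard_compl_pair_neg {N m : ℕ} [NeZero N] (hN : N = 2 * m) :
    ∑ i : ZMod N, ({i, -i}ᶜ : Set (ZMod N)).ncard + 2 * N = N * N + 2 := by
  classical
  have hcard := Finset.card_filter_add_card_filter_not (s := Finset.univ)
    fun i : ZMod N => i + i = 0
  have hself : (Finset.univ.filter fun i : ZMod N => i + i = 0).card = 2 := by
    rw [← ZMod.ncard_setOf_add_self_eq_zero hN, ncard_eq_toFinset_card', toFinset_ofPred]
  have hsum : ∑ i : ZMod N, (({i, -i}ᶜ : Set (ZMod N)).ncard + if i + i = 0 then 1 else 2) =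
      ∑ _i : ZMod N, N :=
    Finset.sum_congr rfl fun i _ => ZMod.ncard_compl_pair_neg_add i
  rw [Finset.sum_add_distrib, Finset.sum_ite, Finset.sum_const, Finset.sum_const, hself,
    Finset.sum_const, Finset.card_univ, ZMod.card, smul_eq_mul, smul_eq_mul, smul_eq_mul] at hsum
  rw [Finset.card_univ, ZMod.card, hself] at hcard
  omega

section ParabolaCycle

variable {N : ℕ}

/-- The cycle edges `{i, i + 1}` and `{j, j + 1}` share no corner. -/
def EdgesDisjoint (i j : ZMod N) : Prop := i ≠ j ∧ i + 1 ≠ j ∧ j + 1 ≠ i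

def GenericChords (τ : ZMod N → ℝ) : Prop :=
  ∀ i j k, EdgesDisjoint i j → EdgesDisjoint j k → EdgesDisjoint i k →
    chordDet (τ i) (τ (i + 1)) (τ j) (τ (j + 1)) (τ k) (τ (k + 1)) ≠ 0

variable {τ : ZMod N → ℝ}

lemma parabola_mem_cycleSeg_iff (hτ : Function.Injective τ) (v e : ZMod N) :
    parabola (τ v) ∈ cycleSeg N (parabola ∘ τ) e ↔ v = e ∨ v = e + 1 := by
  simp [cycleSeg, parabola_mem_segment_parabola_iff, hτ.eq_iff]

lemma cycleSeg_inter_subsingleton (hN : 2 < N) (hτ : Function.Injective τ) {i j : ZMod N}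
    (hij : i ≠ j) :
    (cycleSeg N (parabola ∘ τ) i ∩ cycleSeg N (parabola ∘ τ) j).Subsingleton := by
  refine segment_parabola_inter_subsingleton (fun h => hij (hτ h.1)) fun ⟨h₁, h₂⟩ => ?_
  have : N ∣ 2 := by
    rw [← ZMod.natCast_eq_zero_iff, Nat.cast_ofNat]
    linear_combination hτ h₂ - hτ h₁
  exact absurd (Nat.le_of_dvd two_pos this) (by omega)

lemma eq_or_eq_or_eq_of_mem_cycleSeg (hN : 2 < N) (hτ : Function.Injective τ)
    (hgen : GenericChords τ) {x : ℝ × ℝ} {i j k : ZMod N}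
    (hi : x ∈ cycleSeg N (parabola ∘ τ) i) (hj : x ∈ cycleSeg N (parabola ∘ τ) j)
    (hk : x ∈ cycleSeg N (parabola ∘ τ) k) :
    i = j ∨ j = k ∨ i = k := by
  by_contra! hne
  obtain ⟨hij, hjk, hik⟩ := hne
  by_cases hcorner : ∃ v, x = parabola (τ v)
  · obtain ⟨v, rfl⟩ := hcorner
    rw [parabola_mem_cycleSeg_iff hτ] at hi hj hk
    grind
  simp only [not_exists] at hcorner
  -- two segments through `x` that share a corner meet only there, so `x` would be that corner
  have hdisj : ∀ e e', e ≠ e' → x ∈ cycleSeg N (parabola ∘ τ) e →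
      x ∈ cycleSeg N (parabola ∘ τ) e' → EdgesDisjoint e e' := by
    intro e e' hee' he he'
    have hcorner_mem : ∀ v, parabola (τ v) ∈ cycleSeg N (parabola ∘ τ) (v - 1) ∩
        cycleSeg N (parabola ∘ τ) v := fun v => by
      simp [parabola_mem_cycleSeg_iff hτ]
    refine ⟨hee', fun h => hcorner e' ?_, fun h => hcorner e ?_⟩
    · exact cycleSeg_inter_subsingleton hN hτ hee' ⟨he, he'⟩
        (by simpa [← h] using hcorner_mem e')
    · exact cycleSeg_inter_subsingleton hN hτ hee'.symm ⟨he', he⟩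
        (by simpa [← h] using hcorner_mem e)
  exact hgen i j k (hdisj i j hij hi hj) (hdisj j k hjk hj hk) (hdisj i k hik hi hk)
    (chordDet_eq_zero_of_mem hi hj hk)

end ParabolaCycle

section MirrorPattern

def SegmentsMeetIffAddNeZero (N : ℕ) (p : ZMod N → ℝ × ℝ) : Prop :=
  ∀ i j : ZMod N, i ≠ j → ((cycleSeg N p i ∩ cycleSeg N p j).Nonempty ↔ i + j ≠ 0)

variable {N : ℕ} {p : ZMod N → ℝ × ℝ}

lemma SegmentsMeetIffAddNeZero.neighborSet_eq (hp : SegmentsMeetIffAddNeZero N p)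
    (i : ZMod N) : (intersectionGraph (cycleSeg N p)).neighborSet i = {i, -i}ᶜ := by
  ext j
  simp only [SimpleGraph.mem_neighborSet, intersectionGraph, mem_compl_iff, mem_insert_iff,
    mem_singleton_iff, not_or, eq_neg_iff_add_eq_zero]
  exact ⟨fun ⟨hji, h⟩ => ⟨hji, (hp j i hji).1 h⟩, fun ⟨hji, h⟩ => ⟨hji, (hp j i hji).2 h⟩⟩

lemma SegmentsMeetIffAddNeZero.isSplitter_iff (hp : SegmentsMeetIffAddNeZero N p)
    (i : ZMod N) : IsSplitter N p i ↔ i + i = 0 := by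
  refine ⟨fun hs => ?_, fun h j hji => (hp j i hji).2 fun h' => hji ?_⟩
  · by_contra h
    have hne : -i ≠ i := fun h' => h (by rw [← neg_add_cancel i, h'])
    exact (hp (-i) i hne).1 (hs (-i) hne) (neg_add_cancel i)
  · linear_combination h' - h

end MirrorPattern

section Staircase

/-- The position of corner `k` of the `2m`-cycle in the left-to-right order along the parabola.
Even corners get the ranks `0, …, m - 1` and odd corners `m, …, 2m - 1`, so that every edge spans
the middle. The reflection `k ↦ 1 - k`, which maps edge `k` to edge `-k`, preserves the rank
within each half; the mirror pairs of edges are the only strictly nested ones. -/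
def rank (m k : ℕ) : ℕ :=
  (if k % 2 = 0 then 0 else m) + if k = 0 then 0 else if k ≤ m then k - 1 else 2 * m - k

-- Closed forms of the ranks of the left and of the right end of edge `k`.
def edgeLo (m k : ℕ) : ℕ :=
  if k = 0 then 0 else if k = m then m - 1 else if k < m then k - (if k % 2 = 0 then 1 else 0)
  else 2 * m - k - (if k % 2 = 0 then 0 else 1)

def edgeHi (m k : ℕ) : ℕ :=
  m + if k = 0 then 0 else if k = m then m - 1
  else if k < m then k - (if k % 2 = 0 then 0 else 1)
  else 2 * m - k - (if k % 2 = 0 then 1 else 0)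

lemma eq_of_rank_eq {m k l : ℕ} (hk : k < 2 * m) (hl : l < 2 * m) (h : rank m k = rank m l) :
    k = l := by
  unfold rank at h
  split_ifs at h <;> omega

lemma rank_eq_edgeLo_edgeHi {m k k' : ℕ} (hk : k < 2 * m) (hk' : k' < 2 * m)
    (hsucc : k' = k + 1 ∨ k' + 2 * m = k + 1) :
    (rank m k = edgeLo m k ∧ rank m k' = edgeHi m k) ∨
      (rank m k = edgeHi m k ∧ rank m k' = edgeLo m k) := by
  unfold edgeLo edgeHi rank
  split_ifs <;> omega

lemma edge_intervals_cross {m k l : ℕ} (hk : k < 2 * m) (hl : l < 2 * m)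
    (h : k + l ≠ 2 * m) :
    (edgeLo m k ≤ edgeLo m l ∧ edgeLo m l ≤ edgeHi m k ∧ edgeHi m k ≤ edgeHi m l) ∨
      (edgeLo m l ≤ edgeLo m k ∧ edgeLo m k ≤ edgeHi m l ∧ edgeHi m l ≤ edgeHi m k) := by
  unfold edgeLo edgeHi
  split_ifs <;> omega

lemma edge_intervals_nested {m k l : ℕ} (hk : k < 2 * m) (hl : l < 2 * m) (hkl : k ≠ l)
    (h : k + l = 2 * m) :
    (edgeLo m k < edgeLo m l ∧ edgeLo m l ≤ edgeHi m l ∧ edgeHi m l < edgeHi m k) ∨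
      (edgeLo m l < edgeLo m k ∧ edgeLo m k ≤ edgeHi m k ∧ edgeHi m k < edgeHi m l) := by
  unfold edgeLo edgeHi
  split_ifs <;> omega

variable {N m : ℕ} [NeZero N] {σ : ℕ → ℝ}

def cornerParam (m : ℕ) (σ : ℕ → ℝ) (i : ZMod N) : ℝ := σ (rank m i.val)

lemma rank_val_injective (hN : N = 2 * m) :
    Function.Injective fun i : ZMod N => rank m i.val := by
  intro i j h
  have := i.val_lt
  have := j.val_lt
  exact ZMod.val_injective N (eq_of_rank_eq (m := m) (by omega) (by omega) h)

lemma cycleSeg_cornerParam (hN : N = 2 * m) (i : ZMod N) :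
    cycleSeg N (parabola ∘ cornerParam m σ) i =
      segment ℝ (parabola (σ (edgeLo m i.val))) (parabola (σ (edgeHi m i.val))) := by
  have := NeZero.ne N
  have : Fact (1 < N) := ⟨by omega⟩
  have := i.val_lt
  have := (i + 1).val_lt
  have := ZMod.val_add_one_eq_or i
  rcases rank_eq_edgeLo_edgeHi (m := m) (k := i.val) (k' := (i + 1).val) (by omega) (by omega)
    (by omega) with ⟨h₀, h₁⟩ | ⟨h₀, h₁⟩ <;>
    simp only [cycleSeg, Function.comp_apply, cornerParam, h₀, h₁]
  exact segment_symm ℝ _ _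

lemma segmentsMeetIffAddNeZero_cornerParam (hN : N = 2 * m) (hσ : StrictMono σ) :
    SegmentsMeetIffAddNeZero N (parabola ∘ cornerParam m σ) := by
  intro i j hij
  have hi : i.val < 2 * m := hN ▸ i.val_lt
  have hj : j.val < 2 * m := hN ▸ j.val_lt
  have hv : i.val ≠ j.val := (ZMod.val_injective N).ne hij
  rw [cycleSeg_cornerParam hN, cycleSeg_cornerParam hN, Ne, ZMod.add_eq_zero_iff_val]
  constructor
  · intro hne hsum
    rcases edge_intervals_nested hi hj hv (by omega) with ⟨h₁, h₂, h₃⟩ | ⟨h₁, h₂, h₃⟩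
    · rw [segment_parabola_inter_eq_empty (hσ h₁) (hσ.monotone h₂) (hσ h₃)] at hne
      exact not_nonempty_empty hne
    · rw [inter_comm, segment_parabola_inter_eq_empty (hσ h₁) (hσ.monotone h₂) (hσ h₃)] at hne
      exact not_nonempty_empty hne
  · intro hsum
    rcases edge_intervals_cross hi hj (by omega) with ⟨h₁, h₂, h₃⟩ | ⟨h₁, h₂, h₃⟩
    · exact segment_parabola_inter_nonempty (hσ.monotone h₁) (hσ.monotone h₂) (hσ.monotone h₃)
    · rw [inter_comm]
      exact segment_parabola_inter_nonempty (hσ.monotone h₁) (hσ.monotone h₂) (hσ.monotone h₃)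

lemma exists_strictMono_genericChords (hN : N = 2 * m) :
    ∃ σ : ℕ → ℝ, StrictMono σ ∧ GenericChords (cornerParam (N := N) m σ) := by
  classical
  have := NeZero.ne N
  have : Fact (1 < N) := ⟨by omega⟩
  let T := (Finset.univ : Finset (ZMod N × ZMod N × ZMod N)).filter fun t =>
    EdgesDisjoint t.1 t.2.1 ∧ EdgesDisjoint t.2.1 t.2.2 ∧ EdgesDisjoint t.1 t.2.2
  let v : ZMod N → MvPolynomial ℕ ℝ := fun i => X (rank m i.val)
  let P := ∏ t ∈ T, chordDet (v t.1) (v (t.1 + 1)) (v t.2.1) (v (t.2.1 + 1)) (v t.2.2)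
    (v (t.2.2 + 1))
  have hP : P ≠ 0 := Finset.prod_ne_zero_iff.2 fun ⟨i, j, k⟩ ht => by
    obtain ⟨⟨hij, hij₁, hji₁⟩, ⟨hjk, hjk₁, hkj₁⟩, ⟨hik, hik₁, hki₁⟩⟩ :=
      (Finset.mem_filter.1 ht).2
    have hnodup : [i, i + 1, j, j + 1, k, k + 1].Nodup := by
      simp only [List.nodup_cons, List.mem_cons, List.not_mem_nil, or_false, not_or,
        List.nodup_nil, and_true, add_left_inj, left_eq_add, one_ne_zero, not_false_eq_true]
      grind
    exact chordDet_X_ne_zero (hnodup.map (rank_val_injective hN))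
  obtain ⟨σ, hσ, hσP⟩ := exists_eval_ne_zero_of_infinite hP (fun n => Ioo (n : ℝ) (n + 1 / 2))
    fun n => Ioo_infinite (by norm_num)
  refine ⟨σ, strictMono_of_forall_mem_Ioo fun n => hσ n (mem_univ n),
    fun i j k hij hjk hik => ?_⟩
  rw [map_prod, Finset.prod_ne_zero_iff] at hσP
  simpa [v, map_chordDet, cornerParam] using hσP (i, j, k) (by simp [T, hij, hjk, hik])

end Staircase

theorem optimal_even_arrangement_exists (N : ℕ) (hN : 4 ≤ N) (heven : Even N) :
    ∃ p : ZMod N → ℝ × ℝ,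
      (∀ i j k : ZMod N, i ≠ j → j ≠ k → i ≠ k →
        ¬ Collinear ℝ ({p i, p j, p k} : Set (ℝ × ℝ))) ∧
      {i : ZMod N | IsSplitter N p i}.ncard = 2 ∧
      (∀ i : ZMod N, ¬ IsSplitter N p i →
        {j : ZMod N | j ≠ i ∧ (cycleSeg N p j ∩ cycleSeg N p i).Nonempty}.ncard = N - 2) ∧
      {x : ℝ × ℝ | ∃ i j : ZMod N, i ≠ j ∧
        x ∈ cycleSeg N p i ∧ x ∈ cycleSeg N p j}.ncard = (N ^ 2 - 2 * N + 2) / 2 := by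
  obtain ⟨m, hm⟩ := heven
  have hNm : N = 2 * m := by omega
  have : NeZero N := ⟨by omega⟩
  obtain ⟨σ, hσ, hgen⟩ := exists_strictMono_genericChords hNm
  have hτ : Function.Injective (cornerParam (N := N) m σ) :=
    hσ.injective.comp (rank_val_injective hNm)
  have hp := segmentsMeetIffAddNeZero_cornerParam hNm hσ
  refine ⟨parabola ∘ cornerParam m σ, fun i j k hij hjk hik =>
    not_collinear_parabola (hτ.ne hij) (hτ.ne hik) (hτ.ne hjk), ?_, fun i hi => ?_, ?_⟩
  · simp_rw [hp.isSplitter_iff]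
    exact ZMod.ncard_setOf_add_self_eq_zero hNm
  · have := ZMod.ncard_compl_pair_neg_add i
    rw [hp.isSplitter_iff] at hi
    rw [← hp.neighborSet_eq i, if_neg hi] at this
    exact (Nat.sub_eq_of_eq_add this.symm).symm
  · rw [ncard_setOf_mem_two_eq_ncard_edgeSet (fun i j => cycleSeg_inter_subsingleton (by omega) hτ)
      fun x i j k => eq_or_eq_or_eq_of_mem_cycleSeg (by omega) hτ hgen]
    have hsum := (intersectionGraph (cycleSeg N (parabola ∘ cornerParam m σ))).sum_ncard_neighborSet
    simp_rw [hp.neighborSet_eq] at hsum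
    have := ZMod.sum_ncard_compl_pair_neg hNm
    have : 4 * N ≤ N * N := Nat.mul_le_mul_right N hN
    rw [sq]
    omega
end

section
/- Let N ≥ 3 be odd, let p k = (cos(2πk/N), sin(2πk/N)) ∈ ℝ² for k ∈ ZMod N, and for each k ∈ ZMod N let s k = segment ℝ (p k) (p (k + (N−1)/2)). Then no two distinct segments s j, s k are collinear (lie on a common line), and consequently every pair of distinct segments intersects in exactly one point. -/
/-!
Write `N = 2m + 1` and `α = πm/N`. Chord `k` joins the vertices at angles `2πk/N` and
`2π(k + m)/N`, so it lies on the line `x cos φₖ + y sin φₖ = cos α` with `φₖ = 2πk/N + α`.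
Two of these lines have normals differing by `2π(k - j)/N`, which is not a multiple of `π`
because `N` is odd, so they meet in exactly one point.

Vertex `q` lies on the far side of the line of chord `j` exactly when `(q - j) mod N ∈ [m, 2m]`,
and adding `m` to `q` moves between this range and `[0, m]`; hence the line of chord `j`
separates the endpoints of chord `k`, and chord `k` meets it. The point where chord `k` meets
line `j` and the point where chord `j` meets line `k` both lie on the two lines, so they coincide.
If the two chords were collinear, chord `k` would lie on line `j` as well as on line `k`, and its
two (distinct) endpoints would coincide.
-/

open Real

theorem AffineMap.apply_eq_of_mem_affineSpan_pair {k V₁ P₁ V₂ P₂ : Type*} [Ring k]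
    [AddCommGroup V₁] [Module k V₁] [AddTorsor V₁ P₁] [AddCommGroup V₂] [Module k V₂]
    [AddTorsor V₂ P₂] (f : P₁ →ᵃ[k] P₂) {a b x : P₁} (hab : f a = f b)
    (hx : x ∈ line[k, a, b]) : f x = f a := by
  obtain ⟨t, rfl⟩ := mem_affineSpan_pair_iff_exists_lineMap_eq.mp hx
  rw [f.apply_lineMap, hab, AffineMap.lineMap_same_apply]

theorem exists_mem_segment_apply_eq_of_mul_nonpos {E : Type*} [AddCommGroup E] [Module ℝ E]
    [TopologicalSpace E] [IsTopologicalAddGroup E] [ContinuousSMul ℝ E] {f : E → ℝ}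
    (hf : Continuous f) {a b : E} {r : ℝ} (h : (f a - r) * (f b - r) ≤ 0) :
    ∃ x ∈ segment ℝ a b, f x = r := by
  have hconn := (convex_segment a b).isPreconnected
  have ha := left_mem_segment ℝ a b
  have hb := right_mem_segment ℝ a b
  suffices r ∈ f '' segment ℝ a b from this
  rcases mul_nonpos_iff.mp h with ⟨ha', hb'⟩ | ⟨ha', hb'⟩
  · exact hconn.intermediate_value hb ha hf.continuousOn ⟨by linarith, by linarith⟩
  · exact hconn.intermediate_value ha hb hf.continuousOn ⟨by linarith, by linarith⟩

theorem Real.Angle.eq_of_cos_eq_of_sin_eq {θ ψ : Angle} (hcos : θ.cos = ψ.cos)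
    (hsin : θ.sin = ψ.sin) : θ = ψ := by
  induction θ using Real.Angle.induction_on
  induction ψ using Real.Angle.induction_on
  rw [Angle.cos_coe, Angle.cos_coe] at hcos
  rw [Angle.sin_coe, Angle.sin_coe] at hsin
  exact Angle.cos_sin_inj hcos hsin

theorem Real.Angle.cos_sub (θ ψ : Angle) : (θ - ψ).cos = θ.cos * ψ.cos + θ.sin * ψ.sin := by
  rw [sub_eq_add_neg, Angle.cos_add, Angle.cos_neg, Angle.sin_neg]
  ring

theorem Real.Angle.sin_sub (θ ψ : Angle) : (θ - ψ).sin = θ.sin * ψ.cos - θ.cos * ψ.sin := by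
  rw [sub_eq_add_neg, Angle.sin_add, Angle.cos_neg, Angle.sin_neg]
  ring

theorem Real.cos_le_cos_of_abs_le {x a : ℝ} (hx : |x| ≤ a) (ha : a ≤ π) : cos a ≤ cos x := by
  rw [← Real.cos_abs x]
  exact cos_le_cos_of_nonneg_of_le_pi (abs_nonneg x) ha hx

theorem Real.cos_le_cos_of_le_of_le_two_pi_sub {x a : ℝ} (ha : 0 ≤ a) (hax : a ≤ x)
    (hx : x ≤ 2 * π - a) : cos x ≤ cos a := by
  rcases le_total x π with h | h
  · exact cos_le_cos_of_nonneg_of_le_pi ha h hax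
  · rw [← Real.cos_two_pi_sub x]
    exact cos_le_cos_of_nonneg_of_le_pi ha (by linarith) (by linarith)

/-- The lines of the plane are the level sets of `hesseForm φ` (Hesse normal form). -/
noncomputable def hesseForm (φ : Angle) : ℝ × ℝ →L[ℝ] ℝ :=
  φ.cos • ContinuousLinearMap.fst ℝ ℝ ℝ + φ.sin • ContinuousLinearMap.snd ℝ ℝ ℝ

@[simp]
theorem hesseForm_apply (φ : Angle) (x : ℝ × ℝ) :
    hesseForm φ x = φ.cos * x.1 + φ.sin * x.2 :=
  rfl

theorem hesseForm_cos_sin (φ θ : Angle) : hesseForm φ (θ.cos, θ.sin) = (θ - φ).cos := by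
  rw [hesseForm_apply, Angle.cos_sub]
  ring

theorem eq_of_hesseForm_eq_of_hesseForm_eq {φ ψ : Angle} (h : (ψ - φ).sin ≠ 0) {x y : ℝ × ℝ}
    (hφ : hesseForm φ x = hesseForm φ y) (hψ : hesseForm ψ x = hesseForm ψ y) : x = y := by
  rw [Angle.sin_sub] at h
  simp only [hesseForm_apply] at hφ hψ
  have h₁ : (ψ.sin * φ.cos - ψ.cos * φ.sin) * (x.1 - y.1) = 0 := by
    linear_combination ψ.sin * hφ - φ.sin * hψ
  have h₂ : (ψ.sin * φ.cos - ψ.cos * φ.sin) * (x.2 - y.2) = 0 := by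
    linear_combination φ.cos * hψ - ψ.cos * hφ
  exact Prod.ext (sub_eq_zero.mp ((mul_eq_zero.mp h₁).resolve_left h))
    (sub_eq_zero.mp ((mul_eq_zero.mp h₂).resolve_left h))

namespace StarPolygon

variable {m : ℕ}

/-- `k ↦ 2πk/N` for `N = 2m + 1`, made a group hom by rescaling `ZMod.toAddCircle`. -/
noncomputable def angle (m : ℕ) : ZMod (2 * m + 1) →+ Angle :=
  (AddCircle.equivAddCircle 1 (2 * π) one_ne_zero two_pi_pos.ne').toAddMonoidHom.comp
    ZMod.toAddCircle

theorem angle_apply (k : ZMod (2 * m + 1)) :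
    angle m k = (2 * π * k.val / (2 * m + 1 : ℕ) : ℝ) := by
  change AddCircle.equivAddCircle 1 (2 * π) _ _ (ZMod.toAddCircle k) = _
  rw [ZMod.toAddCircle_apply, AddCircle.equivAddCircle_apply_mk]
  congr 1
  ring

theorem angle_injective : Function.Injective (angle m) := fun _ _ h =>
  ZMod.toAddCircle_injective _ ((AddCircle.equivAddCircle _ _ _ _).injective h)

/-- Half the central angle subtended by a chord. -/
noncomputable def halfAngle (m : ℕ) : ℝ := m * (π / (2 * m + 1))

theorem angle_natCast_self : angle m m = (2 * halfAngle m : ℝ) := by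
  change AddCircle.equivAddCircle 1 (2 * π) _ _ (ZMod.toAddCircle (m : ZMod (2 * m + 1))) = _
  rw [ZMod.toAddCircle_natCast, AddCircle.equivAddCircle_apply_mk, halfAngle]
  congr 1
  push_cast
  ring

theorem sin_angle_ne_zero {k : ZMod (2 * m + 1)} (hk : k ≠ 0) : (angle m k).sin ≠ 0 := by
  intro h
  have h₂ : angle m ((2 : ℕ) • k) = 0 := by
    rw [map_nsmul]
    exact Angle.two_nsmul_eq_zero_iff.mpr (Angle.sin_eq_zero_iff.mp h)
  rw [map_eq_zero_iff _ angle_injective, two_nsmul, ← two_mul] at h₂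
  have hinv : ((m + 1 : ℕ) : ZMod (2 * m + 1)) * 2 = 1 := by
    have := ZMod.natCast_self (2 * m + 1)
    push_cast at this ⊢
    linear_combination this
  apply hk
  calc k = ((m + 1 : ℕ) : ZMod (2 * m + 1)) * 2 * k := by rw [hinv, one_mul]
    _ = 0 := by rw [mul_assoc, h₂, mul_zero]

noncomputable def vertex (m : ℕ) (k : ZMod (2 * m + 1)) : ℝ × ℝ :=
  ((angle m k).cos, (angle m k).sin)

theorem vertex_injective : Function.Injective (vertex m) := fun _ _ h =>
  angle_injective (Angle.eq_of_cos_eq_of_sin_eq (congrArg Prod.fst h) (congrArg Prod.snd h))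

noncomputable def chord (m : ℕ) (k : ZMod (2 * m + 1)) : Set (ℝ × ℝ) :=
  segment ℝ (vertex m k) (vertex m (k + m))

noncomputable def normal (m : ℕ) (k : ZMod (2 * m + 1)) : Angle := angle m k + halfAngle m

def chordLine (m : ℕ) (k : ZMod (2 * m + 1)) : Set (ℝ × ℝ) :=
  {x | hesseForm (normal m k) x = cos (halfAngle m)}

theorem hesseForm_normal_vertex (j q : ZMod (2 * m + 1)) :
    hesseForm (normal m j) (vertex m q) = (angle m (q - j) - halfAngle m).cos := by
  rw [vertex, hesseForm_cos_sin, normal, map_sub, sub_add_eq_sub_sub]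

theorem vertex_mem_chordLine (k : ZMod (2 * m + 1)) : vertex m k ∈ chordLine m k := by
  rw [chordLine, Set.mem_ofPred_eq, hesseForm_normal_vertex, sub_self, map_zero, zero_sub,
    Angle.cos_neg, Angle.cos_coe]

theorem vertex_add_mem_chordLine (k : ZMod (2 * m + 1)) : vertex m (k + m) ∈ chordLine m k := by
  rw [chordLine, Set.mem_ofPred_eq, hesseForm_normal_vertex, add_sub_cancel_left,
    angle_natCast_self, ← Angle.coe_sub, Angle.cos_coe, two_mul, add_sub_cancel_right]

theorem chord_subset_chordLine (k : ZMod (2 * m + 1)) : chord m k ⊆ chordLine m k :=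
  (convex_hyperplane (hesseForm (normal m k)).toLinearMap.isLinear _).segment_subset
    (vertex_mem_chordLine k) (vertex_add_mem_chordLine k)

theorem chordLine_inter_subsingleton {j k : ZMod (2 * m + 1)} (h : j ≠ k) :
    (chordLine m j ∩ chordLine m k).Subsingleton := by
  rintro x ⟨hxj, hxk⟩ y ⟨hyj, hyk⟩
  refine eq_of_hesseForm_eq_of_hesseForm_eq ?_ (hxj.trans hyj.symm) (hxk.trans hyk.symm)
  rw [normal, normal, add_sub_add_right_eq_sub, ← map_sub]
  exact sin_angle_ne_zero (sub_ne_zero.mpr h.symm)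

theorem hesseForm_normal_vertex_eq_cos (j q : ZMod (2 * m + 1)) :
    hesseForm (normal m j) (vertex m q) = cos ((2 * (q - j).val - m) * (π / (2 * m + 1))) := by
  rw [hesseForm_normal_vertex, angle_apply, halfAngle, ← Angle.coe_sub, Angle.cos_coe]
  congr 1
  push_cast
  ring

theorem cos_halfAngle_le_hesseForm {j q : ZMod (2 * m + 1)} (h : (q - j).val ≤ m) :
    cos (halfAngle m) ≤ hesseForm (normal m j) (vertex m q) := by
  set c := π / (2 * m + 1) with hc_def
  have hc : 0 < c := by positivity
  have hπ : π = (2 * m + 1) * c := by rw [hc_def]; field_simp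
  have hd : ((q - j).val : ℝ) ≤ m := by exact_mod_cast h
  have hd₀ : (0 : ℝ) ≤ (q - j).val := Nat.cast_nonneg _
  rw [hesseForm_normal_vertex_eq_cos, halfAngle]
  refine cos_le_cos_of_abs_le (abs_le.mpr ⟨?_, ?_⟩) ?_ <;> nlinarith

theorem hesseForm_le_cos_halfAngle {j q : ZMod (2 * m + 1)} (h : m ≤ (q - j).val) :
    hesseForm (normal m j) (vertex m q) ≤ cos (halfAngle m) := by
  set c := π / (2 * m + 1) with hc_def
  have hc : 0 < c := by positivity
  have hπ : π = (2 * m + 1) * c := by rw [hc_def]; field_simp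
  have hd : (m : ℝ) ≤ (q - j).val := by exact_mod_cast h
  have hd' : ((q - j).val : ℝ) + 1 ≤ 2 * m + 1 := by exact_mod_cast (q - j).val_lt
  rw [hesseForm_normal_vertex_eq_cos, halfAngle]
  refine cos_le_cos_of_le_of_le_two_pi_sub (by positivity) ?_ ?_ <;> nlinarith

theorem hesseForm_normal_vertex_sub_mul_nonpos (j q : ZMod (2 * m + 1)) :
    (hesseForm (normal m j) (vertex m q) - cos (halfAngle m)) *
      (hesseForm (normal m j) (vertex m (q + m)) - cos (halfAngle m)) ≤ 0 := by
  have hval : (q + m - j).val = ((q - j).val + m) % (2 * m + 1) := by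
    rw [add_sub_right_comm, ZMod.val_add, ZMod.val_natCast_of_lt (by omega)]
  have hlt := (q - j).val_lt
  rcases le_or_gt (q - j).val m with h | h
  · refine mul_nonpos_of_nonneg_of_nonpos (sub_nonneg.mpr (cos_halfAngle_le_hesseForm h))
      (sub_nonpos.mpr (hesseForm_le_cos_halfAngle ?_))
    rw [hval, Nat.mod_eq_of_lt (by omega)]
    omega
  · refine mul_nonpos_of_nonpos_of_nonneg (sub_nonpos.mpr (hesseForm_le_cos_halfAngle h.le))
      (sub_nonneg.mpr (cos_halfAngle_le_hesseForm ?_))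
    rw [hval, Nat.mod_eq_sub_mod (by omega), Nat.mod_eq_of_lt (by omega)]
    omega

theorem exists_mem_chord_mem_chordLine (j q : ZMod (2 * m + 1)) :
    ∃ x ∈ chord m q, x ∈ chordLine m j :=
  exists_mem_segment_apply_eq_of_mul_nonpos (hesseForm (normal m j)).continuous
    (hesseForm_normal_vertex_sub_mul_nonpos j q)

theorem not_collinear_chord_union {j k : ZMod (2 * m + 1)} (h : j ≠ k) :
    ¬ Collinear ℝ (chord m j ∪ chord m k) := by
  intro hcol
  have hm : (m : ZMod (2 * m + 1)) ≠ 0 := by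
    rcases Nat.eq_zero_or_pos m with rfl | hm
    · exact absurd (Subsingleton.elim (α := ZMod 1) j k) h
    · rw [Ne, ZMod.natCast_eq_zero_iff]
      exact Nat.not_dvd_of_pos_of_lt hm (by omega)
  have hne (q : ZMod (2 * m + 1)) : vertex m q ≠ vertex m (q + m) := fun hq =>
    hm (left_eq_add.mp (vertex_injective hq))
  have hsub : chord m j ∪ chord m k ⊆ chordLine m j := fun x hx => by
    have hx_span := hcol.mem_affineSpan_of_mem_of_ne (.inl (left_mem_segment ℝ _ _))
      (.inl (right_mem_segment ℝ _ _)) hx (hne j)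
    exact ((hesseForm (normal m j)).toLinearMap.toAffineMap.apply_eq_of_mem_affineSpan_pair
      ((vertex_mem_chordLine j).trans (vertex_add_mem_chordLine j).symm) hx_span).trans
      (vertex_mem_chordLine j)
  exact hne k (chordLine_inter_subsingleton h
    ⟨hsub (.inr (left_mem_segment ℝ _ _)), vertex_mem_chordLine k⟩
    ⟨hsub (.inr (right_mem_segment ℝ _ _)), vertex_add_mem_chordLine k⟩)

theorem existsUnique_mem_chord_inter {j k : ZMod (2 * m + 1)} (h : j ≠ k) :
    ∃! x, x ∈ chord m j ∩ chord m k := by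
  have hlines := chordLine_inter_subsingleton h
  obtain ⟨x, hxk, hxj⟩ := exists_mem_chord_mem_chordLine j k
  obtain ⟨y, hyj, hyk⟩ := exists_mem_chord_mem_chordLine k j
  have hx : x ∈ chordLine m j ∩ chordLine m k := ⟨hxj, chord_subset_chordLine k hxk⟩
  obtain rfl : x = y := hlines hx ⟨chord_subset_chordLine j hyj, hyk⟩
  refine ⟨x, ⟨hyj, hxk⟩, fun z hz => hlines ?_ hx⟩
  exact ⟨chord_subset_chordLine j hz.1, chord_subset_chordLine k hz.2⟩

end StarPolygon

theorem star_polygon_segments_not_collinear_general (N : ℕ) (hodd : Odd N)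
    (p : ZMod N → ℝ × ℝ)
    (hp : ∀ k : ZMod N,
      p k = (Real.cos (2 * π * k.val / N), Real.sin (2 * π * k.val / N)))
    (s : ZMod N → Set (ℝ × ℝ))
    (hs : ∀ k : ZMod N, s k = segment ℝ (p k) (p (k + (((N - 1) / 2 : ℕ) : ZMod N)))) :
    (∀ j k : ZMod N, j ≠ k → ¬ Collinear ℝ (s j ∪ s k)) ∧
    (∀ j k : ZMod N, j ≠ k → ∃! x : ℝ × ℝ, x ∈ s j ∩ s k) := by
  obtain ⟨m, rfl⟩ := hodd
  obtain rfl : p = StarPolygon.vertex m := funext fun k => by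
    rw [hp, StarPolygon.vertex, StarPolygon.angle_apply, Angle.cos_coe, Angle.sin_coe]
  obtain rfl : s = StarPolygon.chord m := funext fun k => by
    rw [hs, show (2 * m + 1 - 1) / 2 = m by omega, StarPolygon.chord]
  exact ⟨fun _ _ => StarPolygon.not_collinear_chord_union,
    fun _ _ => StarPolygon.existsUnique_mem_chord_inter⟩

theorem star_polygon_segments_not_collinear (N : ℕ) (hN : 3 ≤ N) (hodd : Odd N)
    (p : ZMod N → ℝ × ℝ)
    (hp : ∀ k : ZMod N,
      p k = (Real.cos (2 * π * k.val / N), Real.sin (2 * π * k.val / N)))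
    (s : ZMod N → Set (ℝ × ℝ))
    (hs : ∀ k : ZMod N, s k = segment ℝ (p k) (p (k + (((N - 1) / 2 : ℕ) : ZMod N)))) :
    (∀ j k : ZMod N, j ≠ k → ¬ Collinear ℝ (s j ∪ s k)) ∧
    (∀ j k : ZMod N, j ≠ k → ∃! x : ℝ × ℝ, x ∈ s j ∩ s k) :=
  star_polygon_segments_not_collinear_general N hodd p hp s hs
end
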